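/- arXiv:1404.3396 — 10 statements merged into one kernel-verified Lean document; each statement's English description precedes it below -/
import Mathlib

section
/- Let f : {-1,1}^n → [-1,1] be a function of degree at most d as a multilinear polynomial. Then for every point x in {-1,1}^n, the sum over i of |f(x) - f(x ⊕ e_i)|/2 is at most d^2. In particular, the total L1 influence of f, defined as the sum over i of E_x[|f(x) - f(x ⊕ e_i)|/2], is at most d^2. -/
open Finset

/-- The Fourier character χ_S evaluated at a point of the Boolean cube
(coordinates encoded by `Bool`, with `true ↦ 1` and `false ↦ -1`). -/
noncomputable def char {n : ℕ} (S : Finset (Fin n)) (x : Fin n → Bool) : ℝ :=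
  ∏ i ∈ S, (if x i then (1 : ℝ) else -1)

/-- The multilinear polynomial with Fourier coefficients `c`, evaluated on the cube. -/
noncomputable def eval' {n : ℕ} (c : Finset (Fin n) → ℝ) (x : Fin n → Bool) : ℝ :=
  ∑ S : Finset (Fin n), c S * char S x

/-- Flip the i-th coordinate. -/
def flipAt {n : ℕ} (x : Fin n → Bool) (i : Fin n) : Fin n → Bool :=
  Function.update x i (!(x i))

/-- Expectation over the uniform measure on the cube. -/
noncomputable def Ex {n : ℕ} (g : (Fin n → Bool) → ℝ) : ℝ :=
  (∑ x : Fin n → Bool, g x) / 2 ^ n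

/-!
Fix `x`, let `F` be the multilinear extension of `f` to the solid cube `[-1, 1]ⁿ` and let
`ε i = ±1` be the sign of `f_i(x)`. Then `∑ i, |f_i(x)| = H(1)` for a polynomial `H` of degree
`< d` (`derivPoly`) such that `-sin α · H(cos α)` is the derivative at `θ = 0` of
`θ ↦ F(x_i cos(α + ε_i θ))`. This is a trigonometric polynomial of degree `≤ d`, bounded by `1`
because `F` is bounded on the solid cube by its values at the vertices. Bernstein's inequality
gives `|sin α · H(cos α)| ≤ d` for every `α`, and Schur's inequality
`|H(1)| ≤ d · sup_α |sin α · H(cos α)|` then gives `∑ i, |f_i(x)| ≤ d²`.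
-/

open Polynomial Real

namespace Polynomial

theorem le_degree_of_alternating_signs {q : ℝ[X]} {m : ℕ} {μ : ℕ → ℝ}
    (hμ : StrictAntiOn μ (Set.Iic m)) (hsign : ∀ k ≤ m, 0 < (-1) ^ k * q.eval (μ k)) :
    (m : WithBot ℕ) ≤ q.degree := by
  have hq : q ≠ 0 := by
    rintro rfl
    simpa using hsign 0 (Nat.zero_le m)
  have hroot : ∀ k : Fin m, ∃ r ∈ Set.Ioo (μ (k + 1)) (μ k), q.eval r = 0 := by
    intro k
    have hlt : μ (k + 1) < μ k := hμ (Set.mem_Iic.mpr k.2.le) (Set.mem_Iic.mpr k.2)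
      (Nat.lt_succ_self k)
    have hk := hsign k k.2.le
    have hk1 := hsign (k + 1) k.2
    have hcont := q.continuous.continuousOn (s := Set.Icc (μ (k + 1)) (μ k))
    rw [pow_succ] at hk1
    rcases neg_one_pow_eq_or ℝ k with hpow | hpow <;> rw [hpow] at hk hk1
    · exact intermediate_value_Ioo hlt.le hcont ⟨by linarith, by linarith⟩
    · exact intermediate_value_Ioo' hlt.le hcont ⟨by linarith, by linarith⟩
  choose r hr hqr using hroot
  have hr_anti : StrictAnti r := fun k l hkl =>
    calc r l < μ l := (hr l).2
      _ ≤ μ (k + 1) := hμ.antitoneOn (Set.mem_Iic.mpr k.2) (Set.mem_Iic.mpr l.2.le) hkl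
      _ < r k := (hr k).1
  by_contra! hdeg
  refine hq (eq_zero_of_natDegree_lt_card_of_eval_eq_zero q hr_anti.injective hqr ?_)
  rwa [Fintype.card_fin, natDegree_lt_iff_degree_lt hq]

theorem succ_le_degree_of_alternating_signs_of_isRoot {q : ℝ[X]} {m : ℕ} {μ : ℕ → ℝ} {a : ℝ}
    (hμ : StrictAntiOn μ (Set.Iic m)) (hμa : ∀ k ≤ m, μ k < a) (ha : q.IsRoot a)
    (hsign : ∀ k ≤ m, 0 < (-1) ^ k * q.eval (μ k)) :
    ((m + 1 : ℕ) : WithBot ℕ) ≤ q.degree := by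
  set q' := q /ₘ (X - C a)
  have hfactor : (X - C a) * q' = q := mul_divByMonic_eq_iff_isRoot.mpr ha
  have hq'_sign : ∀ k ≤ m, 0 < (-1) ^ k * (-q').eval (μ k) := by
    intro k hk
    have hqk := hsign k hk
    rw [← hfactor, eval_mul] at hqk
    simp only [eval_sub, eval_X, eval_C, eval_neg] at hqk ⊢
    nlinarith [hμa k hk]
  have hq'_deg := le_degree_of_alternating_signs hμ hq'_sign
  rw [degree_neg] at hq'_deg
  calc ((m + 1 : ℕ) : WithBot ℕ) = 1 + m := by push_cast; exact add_comm _ _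
    _ ≤ 1 + q'.degree := by gcongr
    _ = q.degree := by rw [← hfactor, degree_mul, degree_X_sub_C]

end Polynomial

noncomputable def chebyshevAngle (d k : ℕ) : ℝ := (2 * k + 1) * π / (2 * d)

theorem chebyshevAngle_mem_Ioo {d k : ℕ} (hk : k < d) : chebyshevAngle d k ∈ Set.Ioo 0 π := by
  have hd : (0 : ℝ) < d := by exact_mod_cast (Nat.zero_le k).trans_lt hk
  have hkd : (k : ℝ) + 1 ≤ d := by exact_mod_cast hk
  refine ⟨by unfold chebyshevAngle; positivity, ?_⟩
  rw [chebyshevAngle, div_lt_iff₀ (by positivity)]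
  nlinarith [pi_pos]

theorem chebyshevAngle_strictMono {d : ℕ} (hd : 0 < d) : StrictMono (chebyshevAngle d) := by
  intro k l hkl
  have hkl : (k : ℝ) < l := by exact_mod_cast hkl
  unfold chebyshevAngle
  gcongr

theorem sin_mul_chebyshevAngle {d : ℕ} (hd : d ≠ 0) (k : ℕ) :
    sin (d * chebyshevAngle d k) = (-1) ^ k := by
  have : (d : ℝ) * chebyshevAngle d k = k * π + π / 2 := by
    unfold chebyshevAngle
    field_simp
  rw [this, sin_add_pi_div_two, cos_nat_mul_pi]

theorem strictAntiOn_cos_chebyshevAngle (m : ℕ) :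
    StrictAntiOn (fun k => cos (chebyshevAngle (m + 1) k)) (Set.Iic m) :=
  strictAntiOn_cos.comp_strictMonoOn ((chebyshevAngle_strictMono m.succ_pos).strictMonoOn _)
    fun _ hk => Set.Ioo_subset_Icc_self (chebyshevAngle_mem_Ioo (Nat.lt_succ_of_le hk))

/-- If `h(1) > (m + 1) M`, this polynomial has a root at `1` and alternates in sign at the
Chebyshev nodes `cos ((2k + 1)π / (2m + 2))`, although its degree is at most `m`. -/
noncomputable def schurPoly (h : ℝ[X]) (m : ℕ) : ℝ[X] :=
  h.eval 1 • Chebyshev.U ℝ m - ((m + 1 : ℕ) : ℝ) • h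

theorem degree_schurPoly_le {h : ℝ[X]} {m : ℕ} (hh : h.degree < ↑(m + 1)) :
    (schurPoly h m).degree ≤ m :=
  (degree_sub_le _ _).trans <| max_le
    ((degree_smul_le _ _).trans (Chebyshev.degree_U_natCast ℝ m).le)
    ((degree_smul_le _ _).trans (Order.le_of_lt_succ hh))

theorem schurPoly_isRoot_one (h : ℝ[X]) (m : ℕ) : (schurPoly h m).IsRoot 1 := by
  simp [schurPoly, Chebyshev.U_eval_one]
  ring

theorem neg_one_pow_mul_eval_schurPoly_pos {h : ℝ[X]} {m k : ℕ} (hk : k ≤ m) {M : ℝ}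
    (hM : ∀ θ, |sin θ * h.eval (cos θ)| ≤ M) (hlt : (m + 1) * M < h.eval 1) :
    0 < (-1) ^ k * (schurPoly h m).eval (cos (chebyshevAngle (m + 1) k)) := by
  have hθ := chebyshevAngle_mem_Ioo (Nat.lt_succ_of_le hk)
  set θ := chebyshevAngle (m + 1) k
  have hsin : 0 < sin θ := sin_pos_of_pos_of_lt_pi hθ.1 hθ.2
  have hU : (Chebyshev.U ℝ m).eval (cos θ) * sin θ = (-1) ^ k := by
    have := sin_mul_chebyshevAngle m.succ_ne_zero k
    push_cast at this
    rw [Chebyshev.U_real_cos]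
    push_cast
    exact this
  have hbound : (-1) ^ k * (sin θ * h.eval (cos θ)) ≤ M := by
    refine le_trans (le_abs_self _) ?_
    rw [abs_mul, abs_pow, abs_neg, abs_one, one_pow, one_mul]
    exact hM θ
  have hsq : ((-1 : ℝ) ^ k) ^ 2 = 1 := by rw [← pow_mul, mul_comm, pow_mul, neg_one_sq, one_pow]
  have key : (-1) ^ k * (schurPoly h m).eval (cos θ) * sin θ
      = h.eval 1 - (m + 1) * ((-1) ^ k * (sin θ * h.eval (cos θ))) := by
    simp only [schurPoly, eval_sub, eval_smul, smul_eq_mul]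
    push_cast
    linear_combination (h.eval 1 * (-1) ^ k) * hU + h.eval 1 * hsq
  refine (mul_pos_iff_of_pos_right hsin).mp ?_
  rw [key]
  nlinarith

theorem eval_one_le_of_abs_sin_mul_eval_cos_le {h : ℝ[X]} {d : ℕ} (hh : h.degree < d) {M : ℝ}
    (hM : ∀ θ, |sin θ * h.eval (cos θ)| ≤ M) : h.eval 1 ≤ d * M := by
  by_contra! hlt
  obtain ⟨m, rfl⟩ : ∃ m, d = m + 1 := by
    refine Nat.exists_eq_add_one.mpr (Nat.pos_of_ne_zero ?_)
    rintro rfl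
    simp [degree_eq_bot.mp (Nat.WithBot.lt_zero_iff.mp hh)] at hlt
  push_cast at hlt
  have hcos_lt_one : ∀ k ≤ m, cos (chebyshevAngle (m + 1) k) < 1 := fun k hk => by
    have hθ := chebyshevAngle_mem_Ioo (Nat.lt_succ_of_le hk)
    simpa using strictAntiOn_cos ⟨le_rfl, pi_pos.le⟩ ⟨hθ.1.le, hθ.2.le⟩ hθ.1
  have := (succ_le_degree_of_alternating_signs_of_isRoot (strictAntiOn_cos_chebyshevAngle m)
    hcos_lt_one (schurPoly_isRoot_one h m)
    fun k hk => neg_one_pow_mul_eval_schurPoly_pos hk hM hlt).trans (degree_schurPoly_le hh)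
  have : m + 1 ≤ m := by exact_mod_cast this
  omega

/-- Schur's inequality. -/
theorem abs_eval_one_le_of_abs_sin_mul_eval_cos_le {h : ℝ[X]} {d : ℕ} (hh : h.degree < d)
    {M : ℝ} (hM : ∀ θ, |sin θ * h.eval (cos θ)| ≤ M) : |h.eval 1| ≤ d * M := by
  refine abs_le.mpr ⟨?_, eval_one_le_of_abs_sin_mul_eval_cos_le hh hM⟩
  have := eval_one_le_of_abs_sin_mul_eval_cos_le (h := -h) (by rwa [degree_neg]) (M := M)
    (by simpa only [eval_neg, mul_neg, abs_neg] using hM)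
  rw [eval_neg] at this
  linarith

theorem Nat.WithBot.lt_of_add_one_le {a : WithBot ℕ} {d : ℕ} (h : a + 1 ≤ d) : a < d := by
  induction a with
  | bot => exact WithBot.bot_lt_coe d
  | coe k => exact WithBot.coe_lt_coe.mpr (WithBot.coe_le_coe.mp h)

/-- Trigonometric polynomials of degree `≤ d`, in the form `E (cos θ) + sin θ · O (cos θ)`;
`deg O < d` is written `deg O + 1 ≤ d` so that degree bounds add up under products. -/
def IsTrigPoly (d : ℕ) (φ : ℝ → ℝ) : Prop :=
  ∃ E O : ℝ[X], E.degree ≤ d ∧ O.degree + 1 ≤ d ∧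
    ∀ θ, φ θ = E.eval (cos θ) + sin θ * O.eval (cos θ)

namespace IsTrigPoly

variable {d d₁ d₂ : ℕ} {φ ψ : ℝ → ℝ}

theorem mono (h : IsTrigPoly d₁ φ) (hd : d₁ ≤ d₂) : IsTrigPoly d₂ φ := by
  obtain ⟨E, O, hE, hO, hφ⟩ := h
  have hd : (d₁ : WithBot ℕ) ≤ d₂ := by exact_mod_cast hd
  exact ⟨E, O, hE.trans hd, hO.trans hd, hφ⟩

theorem const (a : ℝ) : IsTrigPoly 0 fun _ => a :=
  ⟨C a, 0, degree_C_le, by simp, fun θ => by simp⟩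

theorem add (h₁ : IsTrigPoly d φ) (h₂ : IsTrigPoly d ψ) : IsTrigPoly d fun θ => φ θ + ψ θ := by
  obtain ⟨E₁, O₁, hE₁, hO₁, hφ⟩ := h₁
  obtain ⟨E₂, O₂, hE₂, hO₂, hψ⟩ := h₂
  refine ⟨E₁ + E₂, O₁ + O₂, (degree_add_le _ _).trans (max_le hE₁ hE₂), ?_, fun θ => ?_⟩
  · calc (O₁ + O₂).degree + 1 ≤ max O₁.degree O₂.degree + 1 := by gcongr; exact degree_add_le _ _
      _ = max (O₁.degree + 1) (O₂.degree + 1) := (max_add_add_right _ _ _).symm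
      _ ≤ d := max_le hO₁ hO₂
  · simp only [hφ, hψ, eval_add]
    ring

theorem mul (h₁ : IsTrigPoly d₁ φ) (h₂ : IsTrigPoly d₂ ψ) :
    IsTrigPoly (d₁ + d₂) fun θ => φ θ * ψ θ := by
  obtain ⟨E₁, O₁, hE₁, hO₁, hφ⟩ := h₁
  obtain ⟨E₂, O₂, hE₂, hO₂, hψ⟩ := h₂
  have hX : (1 - X ^ 2 : ℝ[X]).degree ≤ 1 + 1 := by compute_degree; exact one_add_one_eq_two.ge
  refine ⟨E₁ * E₂ + (1 - X ^ 2) * (O₁ * O₂), E₁ * O₂ + O₁ * E₂, ?_, ?_, fun θ => ?_⟩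
  · refine (degree_add_le _ _).trans (max_le ?_ ?_)
    · calc (E₁ * E₂).degree ≤ E₁.degree + E₂.degree := degree_mul_le _ _
        _ ≤ ↑(d₁ + d₂) := by push_cast; gcongr
    · calc ((1 - X ^ 2) * (O₁ * O₂)).degree ≤ 1 + 1 + (O₁.degree + O₂.degree) :=
            (degree_mul_le _ _).trans (add_le_add hX (degree_mul_le _ _))
        _ = (O₁.degree + 1) + (O₂.degree + 1) := by abel
        _ ≤ ↑(d₁ + d₂) := by push_cast; gcongr
  · calc (E₁ * O₂ + O₁ * E₂).degree + 1
        ≤ max (E₁.degree + O₂.degree) (O₁.degree + E₂.degree) + 1 := by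
          gcongr
          exact (degree_add_le _ _).trans (max_le_max (degree_mul_le _ _) (degree_mul_le _ _))
      _ = max (E₁.degree + (O₂.degree + 1)) ((O₁.degree + 1) + E₂.degree) := by
          rw [← max_add_add_right]; abel_nf
      _ ≤ ↑(d₁ + d₂) := by push_cast; exact max_le (by gcongr) (by gcongr)
  · have hsin : sin θ ^ 2 = 1 - cos θ ^ 2 := by linarith [sin_sq_add_cos_sq θ]
    simp only [hφ, hψ, eval_add, eval_mul, eval_sub, eval_one, eval_pow, eval_X]
    linear_combination (O₁.eval (cos θ) * O₂.eval (cos θ)) * hsin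

theorem zero (d : ℕ) : IsTrigPoly d fun _ => 0 := (const 0).mono d.zero_le

theorem const_mul (a : ℝ) (h : IsTrigPoly d φ) : IsTrigPoly d fun θ => a * φ θ := by
  simpa using (const a).mul h

theorem sum {ι : Type*} (s : Finset ι) {g : ι → ℝ → ℝ} (h : ∀ i ∈ s, IsTrigPoly d (g i)) :
    IsTrigPoly d fun θ => ∑ i ∈ s, g i θ := by
  classical
  induction s using Finset.induction_on with
  | empty => simpa using zero d
  | insert a s ha ih =>
    simp only [Finset.sum_insert ha]
    exact (h a (mem_insert_self a s)).add (ih fun i hi => h i (mem_insert_of_mem hi))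

theorem prod {ι : Type*} (s : Finset ι) {g : ι → ℝ → ℝ} (h : ∀ i ∈ s, IsTrigPoly 1 (g i)) :
    IsTrigPoly s.card fun θ => ∏ i ∈ s, g i θ := by
  classical
  induction s using Finset.induction_on with
  | empty => simpa using const 1
  | insert a s ha ih =>
    simp only [Finset.prod_insert ha, Finset.card_insert_of_notMem ha, add_comm s.card]
    exact (h a (mem_insert_self a s)).mul (ih fun i hi => h i (mem_insert_of_mem hi))

theorem cos_add_mul {ε : ℝ} (hε : ε = 1 ∨ ε = -1) (α : ℝ) :
    IsTrigPoly 1 fun θ => cos (α + ε * θ) := by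
  refine ⟨C (cos α) * X, C (-(ε * sin α)), by compute_degree!, ?_, fun θ => ?_⟩
  · calc (C (-(ε * sin α))).degree + 1 ≤ 0 + 1 := by gcongr; exact degree_C_le
      _ = 1 := zero_add 1
  rcases hε with rfl | rfl <;> simp [cos_add] <;> ring

/-- Bernstein's inequality at `0`: the odd part `sin θ · O (cos θ)` of `φ` is bounded by `M`
and has derivative `O 1` at `0`, so Schur's inequality applies to `O`. -/
theorem abs_le_of_hasDerivAt_zero {M D : ℝ} (h : IsTrigPoly d φ) (hb : ∀ θ, |φ θ| ≤ M)
    (hD : HasDerivAt φ D 0) : |D| ≤ d * M := by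
  obtain ⟨E, O, -, hO, hφ⟩ := h
  have hD' : HasDerivAt φ (O.eval 1) 0 := by
    rw [show φ = _ from funext hφ]
    simpa using ((E.hasDerivAt _).comp 0 (hasDerivAt_cos 0)).fun_add
      ((hasDerivAt_sin 0).fun_mul ((O.hasDerivAt _).comp 0 (hasDerivAt_cos 0)))
  have hodd : ∀ θ, |sin θ * O.eval (cos θ)| ≤ M := fun θ => by
    have : sin θ * O.eval (cos θ) = (φ θ - φ (-θ)) / 2 := by
      rw [hφ, hφ, cos_neg, sin_neg]
      ring
    rw [this, abs_div, abs_two, div_le_iff₀ two_pos]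
    linarith [abs_sub (φ θ) (φ (-θ)), hb θ, hb (-θ)]
  rw [hD.unique hD']
  exact abs_eval_one_le_of_abs_sin_mul_eval_cos_le (Nat.WithBot.lt_of_add_one_le hO) hodd

end IsTrigPoly

section MultilinearExt

variable {ι : Type*}

def toSign (x : ι → Bool) (i : ι) : ℝ := if x i then 1 else -1

theorem abs_toSign (x : ι → Bool) (i : ι) : |toSign x i| = 1 := by
  unfold toSign
  split_ifs <;> simp

variable [Fintype ι]

noncomputable def multilinearExt (c : Finset ι → ℝ) (z : ι → ℝ) : ℝ :=
  ∑ S, c S * ∏ i ∈ S, z i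

theorem IsTrigPoly.multilinearExt {c : Finset ι → ℝ} {d : ℕ} (hc : ∀ S, c S ≠ 0 → S.card ≤ d)
    {g : ι → ℝ → ℝ} (hg : ∀ i, IsTrigPoly 1 (g i)) :
    IsTrigPoly d fun θ => multilinearExt c fun i => g i θ := by
  refine IsTrigPoly.sum _ fun S _ => ?_
  by_cases hS : c S = 0
  · simpa [hS] using IsTrigPoly.zero d
  · exact ((IsTrigPoly.prod S fun i _ => hg i).const_mul (c S)).mono (hc S hS)

/-- `-sin α · (derivPoly c z ε).eval (cos α)` is the derivative at `0` of
`θ ↦ multilinearExt c (z ⊙ cos (α + ε θ))`. -/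
noncomputable def derivPoly (c : Finset ι → ℝ) (z ε : ι → ℝ) : ℝ[X] :=
  ∑ S, C (c S * (∏ i ∈ S, z i) * ∑ i ∈ S, ε i) * X ^ (S.card - 1)

theorem eval_one_derivPoly (c : Finset ι → ℝ) (z ε : ι → ℝ) :
    (derivPoly c z ε).eval 1 = ∑ S, c S * (∏ i ∈ S, z i) * ∑ i ∈ S, ε i := by
  simp only [derivPoly, eval_finsetSum, eval_mul, eval_C, eval_pow, eval_X, one_pow, mul_one]

theorem degree_derivPoly_lt {c : Finset ι → ℝ} {d : ℕ} (hc : ∀ S, c S ≠ 0 → S.card ≤ d)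
    (z ε : ι → ℝ) : (derivPoly c z ε).degree < d := by
  refine (degree_sum_le _ _).trans_lt ((Finset.sup_lt_iff (WithBot.bot_lt_coe d)).mpr ?_)
  intro S _
  by_cases hS : c S ≠ 0 ∧ S.Nonempty
  · have hcard := hc S hS.1
    have hpos := hS.2.card_pos
    exact (degree_C_mul_X_pow_le _ _).trans_lt
      (WithBot.coe_lt_coe.mpr (by omega : S.card - 1 < d))
  · rw [not_and_or, not_ne_iff, not_nonempty_iff_eq_empty] at hS
    rcases hS with hS | rfl
    · simp [hS, WithBot.bot_lt_coe]
    · simp [WithBot.bot_lt_coe]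

variable [DecidableEq ι]

theorem multilinearExt_eq_update (c : Finset ι → ℝ) (z : ι → ℝ) (j : ι) :
    multilinearExt c z = (1 + z j) / 2 * multilinearExt c (Function.update z j 1)
      + (1 - z j) / 2 * multilinearExt c (Function.update z j (-1)) := by
  simp only [multilinearExt, Finset.mul_sum, ← Finset.sum_add_distrib]
  refine Finset.sum_congr rfl fun S _ => ?_
  by_cases hj : j ∈ S
  · rw [prod_update_of_mem hj, prod_update_of_mem hj, ← mul_prod_erase S z hj,
      ← sdiff_singleton_eq_erase]
    ring
  · rw [prod_update_of_notMem hj, prod_update_of_notMem hj]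
    ring

/-- `multilinearExt c` is affine in each coordinate, so the coordinates can be pushed to `±1` one
at a time. -/
theorem abs_multilinearExt_le {c : Finset ι → ℝ} {M : ℝ}
    (hc : ∀ x : ι → Bool, |multilinearExt c (toSign x)| ≤ M) {z : ι → ℝ} (hz : ∀ i, |z i| ≤ 1) :
    |multilinearExt c z| ≤ M := by
  suffices key : ∀ A : Finset ι, ∀ z : ι → ℝ, (∀ i, |z i| ≤ 1) →
      (∀ i ∉ A, z i = 1 ∨ z i = -1) → |multilinearExt c z| ≤ M from
    key univ z hz fun i hi => absurd (mem_univ i) hi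
  intro A
  induction A using Finset.induction_on with
  | empty =>
    intro z _ hvert
    convert hc fun i => decide (z i = 1)
    funext i
    rcases hvert i (notMem_empty i) with h | h <;> simp [toSign, h]
  | insert a A ha ih =>
    intro z hz hvert
    have hupdate : ∀ s : ℝ, (s = 1 ∨ s = -1) → |multilinearExt c (Function.update z a s)| ≤ M := by
      intro s hs
      refine ih _ (fun i => ?_) (fun i hi => ?_) <;> rcases eq_or_ne i a with rfl | hia
      · rcases hs with rfl | rfl <;> simp
      · simpa [hia] using hz i
      · simpa using hs
      · simpa [hia] using hvert i (by simp [hia, hi])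
    have h₁ := abs_le.mp (hupdate 1 (Or.inl rfl))
    have h₂ := abs_le.mp (hupdate (-1) (Or.inr rfl))
    have hza := abs_le.mp (hz a)
    rw [multilinearExt_eq_update c z a, abs_le]
    constructor <;> nlinarith

theorem hasDerivAt_multilinearExt_mul_cos (c : Finset ι → ℝ) (z ε : ι → ℝ) (α : ℝ) :
    HasDerivAt (fun θ => multilinearExt c fun i => z i * cos (α + ε i * θ))
      (-(sin α * (derivPoly c z ε).eval (cos α))) 0 := by
  have hfactor : ∀ i, HasDerivAt (fun θ => z i * cos (α + ε i * θ)) (z i * (-sin α * ε i)) 0 :=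
    fun i => by simpa using (((hasDerivAt_id 0).const_mul (ε i)).const_add α).cos.const_mul (z i)
  unfold multilinearExt
  refine (HasDerivAt.fun_sum fun S _ =>
    (HasDerivAt.fun_finsetProd fun i _ => hfactor i).const_mul (c S)).congr_deriv ?_
  simp only [mul_zero, add_zero, smul_eq_mul, derivPoly, eval_finsetSum, eval_mul, eval_C,
    eval_pow, eval_X]
  rw [Finset.mul_sum, ← Finset.sum_neg_distrib]
  refine Finset.sum_congr rfl fun S _ => ?_
  calc c S * ∑ i ∈ S, (∏ j ∈ S.erase i, z j * cos α) * (z i * (-sin α * ε i))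
      = ∑ i ∈ S, -(sin α * (c S * (∏ j ∈ S, z j) * ε i * cos α ^ (S.card - 1))) :=
        Finset.mul_sum _ _ _ |>.trans <| Finset.sum_congr rfl fun i hi => by
          rw [prod_mul_distrib, prod_const, card_erase_of_mem hi, ← prod_erase_mul S z hi]
          ring
    _ = _ := by rw [Finset.sum_neg_distrib, ← Finset.mul_sum, ← Finset.sum_mul, ← Finset.mul_sum]

theorem abs_sin_mul_eval_derivPoly_le {c : Finset ι → ℝ} {d : ℕ} (hc : ∀ S, c S ≠ 0 → S.card ≤ d)
    {M : ℝ} (hM : ∀ x : ι → Bool, |multilinearExt c (toSign x)| ≤ M) {z ε : ι → ℝ}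
    (hz : ∀ i, |z i| ≤ 1) (hε : ∀ i, ε i = 1 ∨ ε i = -1) (α : ℝ) :
    |sin α * (derivPoly c z ε).eval (cos α)| ≤ d * M := by
  have htrig := IsTrigPoly.multilinearExt hc fun i =>
    (IsTrigPoly.cos_add_mul (hε i) α).const_mul (z i)
  have hbound : ∀ θ, |multilinearExt c fun i => z i * cos (α + ε i * θ)| ≤ M := fun θ =>
    abs_multilinearExt_le hM fun i => by
      rw [abs_mul]
      exact mul_le_one₀ (hz i) (abs_nonneg _) (abs_cos_le_one _)
  simpa using htrig.abs_le_of_hasDerivAt_zero hbound (hasDerivAt_multilinearExt_mul_cos c z ε α)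

end MultilinearExt

theorem sum_mul_sum_filter_mem {ι : Type*} [Fintype ι] [DecidableEq ι] (ε : ι → ℝ)
    (a : Finset ι → ℝ) : ∑ i, ε i * ∑ S with i ∈ S, a S = ∑ S, a S * ∑ i ∈ S, ε i := by
  simp only [Finset.mul_sum, Finset.sum_filter, mul_ite, mul_zero]
  rw [Finset.sum_comm]
  refine Finset.sum_congr rfl fun S _ => ?_
  rw [Finset.sum_ite_mem, univ_inter]
  exact Finset.sum_congr rfl fun i _ => mul_comm _ _

section BooleanCube

variable {n : ℕ}

theorem eval'_eq_multilinearExt (c : Finset (Fin n) → ℝ) (x : Fin n → Bool) :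
    eval' c x = multilinearExt c (toSign x) := rfl

theorem toSign_flipAt (x : Fin n → Bool) (i : Fin n) :
    toSign (flipAt x i) = Function.update (toSign x) i (-toSign x i) := by
  funext j
  rcases eq_or_ne j i with rfl | hji
  · cases h : x j <;> simp [toSign, flipAt, h]
  · simp [toSign, flipAt, hji]

theorem char_flipAt (S : Finset (Fin n)) (x : Fin n → Bool) (i : Fin n) :
    char S (flipAt x i) = if i ∈ S then -char S x else char S x := by
  change ∏ j ∈ S, toSign (flipAt x i) j = if i ∈ S then -∏ j ∈ S, toSign x j else _
  rw [toSign_flipAt]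
  split_ifs with hi
  · rw [prod_update_of_mem hi, ← mul_prod_erase S _ hi, sdiff_singleton_eq_erase, neg_mul]
  · exact prod_update_of_notMem hi _ _

theorem eval'_sub_eval'_flipAt_div_two (c : Finset (Fin n) → ℝ) (x : Fin n → Bool) (i : Fin n) :
    (eval' c x - eval' c (flipAt x i)) / 2 = ∑ S with i ∈ S, c S * char S x := by
  simp only [eval', ← Finset.sum_sub_distrib, Finset.sum_div, Finset.sum_filter, char_flipAt]
  refine Finset.sum_congr rfl fun S _ => ?_
  split_ifs <;> ring

theorem exists_sign_sum_abs_eq_eval_one_derivPoly (c : Finset (Fin n) → ℝ) (x : Fin n → Bool) :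
    ∃ ε : Fin n → ℝ, (∀ i, ε i = 1 ∨ ε i = -1) ∧
      ∑ i, |eval' c x - eval' c (flipAt x i)| / 2 = (derivPoly c (toSign x) ε).eval 1 := by
  set D : Fin n → ℝ := fun i => (eval' c x - eval' c (flipAt x i)) / 2
  set ε : Fin n → ℝ := fun i => if 0 ≤ D i then 1 else -1
  refine ⟨ε, fun i => by unfold ε; split_ifs <;> simp, ?_⟩
  rw [eval_one_derivPoly]
  calc ∑ i, |eval' c x - eval' c (flipAt x i)| / 2 = ∑ i, ε i * D i :=
        Finset.sum_congr rfl fun i _ => by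
          rw [← abs_two, ← abs_div]
          change |D i| = ε i * D i
          unfold ε
          split_ifs with h
          · rw [abs_of_nonneg h, one_mul]
          · rw [abs_of_neg (not_le.mp h), neg_one_mul]
    _ = ∑ i, ε i * ∑ S with i ∈ S, c S * char S x := by
        simp only [D, eval'_sub_eval'_flipAt_div_two]
    _ = ∑ S, c S * char S x * ∑ i ∈ S, ε i := sum_mul_sum_filter_mem ε _

theorem Ex_sum {ι : Type*} (s : Finset ι) (g : ι → (Fin n → Bool) → ℝ) :
    ∑ i ∈ s, Ex (g i) = Ex fun x => ∑ i ∈ s, g i x := by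
  simp only [Ex, ← Finset.sum_div]
  rw [Finset.sum_comm]

theorem Ex_le {g : (Fin n → Bool) → ℝ} {b : ℝ} (hg : ∀ x, g x ≤ b) : Ex g ≤ b := by
  rw [Ex, div_le_iff₀ (by positivity)]
  calc ∑ x, g x ≤ ∑ _x : Fin n → Bool, b := Finset.sum_le_sum fun x _ => hg x
    _ = b * 2 ^ n := by simp [mul_comm]

end BooleanCube

theorem influence_L1_le_d_sq (n d : ℕ) (c : Finset (Fin n) → ℝ)
    (hdeg : ∀ S, c S ≠ 0 → S.card ≤ d)
    (hbd : ∀ x, |eval' c x| ≤ 1) :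
    (∀ x, ∑ i : Fin n, |eval' c x - eval' c (flipAt x i)| / 2 ≤ (d : ℝ) ^ 2) ∧
    (∑ i : Fin n, Ex (fun x => |eval' c x - eval' c (flipAt x i)| / 2)) ≤ (d : ℝ) ^ 2 := by
  have hpointwise : ∀ x, ∑ i : Fin n, |eval' c x - eval' c (flipAt x i)| / 2 ≤ (d : ℝ) ^ 2 := by
    intro x
    obtain ⟨ε, hε, hsum⟩ := exists_sign_sum_abs_eq_eval_one_derivPoly c x
    have hbernstein : ∀ α, |sin α * (derivPoly c (toSign x) ε).eval (cos α)| ≤ d * 1 :=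
      abs_sin_mul_eval_derivPoly_le hdeg (fun y => eval'_eq_multilinearExt c y ▸ hbd y)
        (fun i => (abs_toSign x i).le) hε
    calc ∑ i, |eval' c x - eval' c (flipAt x i)| / 2
        = (derivPoly c (toSign x) ε).eval 1 := hsum
      _ ≤ |(derivPoly c (toSign x) ε).eval 1| := le_abs_self _
      _ ≤ d * (d * 1) :=
          abs_eval_one_le_of_abs_sin_mul_eval_cos_le (degree_derivPoly_lt hdeg _ _) hbernstein
      _ = (d : ℝ) ^ 2 := by ring
  exact ⟨hpointwise, (Ex_sum _ _).trans_le (Ex_le hpointwise)⟩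
end

section
/- Let f : {-1,1}^n → {-1,1} be a Boolean function whose Fourier expansion is homogeneous of degree d (all nonzero Fourier coefficients are on sets of size exactly d). Then for every x ∈ {-1,1}^n, the sensitivity Δ(f)(x) = Σ_i |f(x) - f(x⊕e_i)|/2 equals exactly d. In particular, Inf^{(1)}[f] = d. -/
open Finset

lemma char_flip {n : ℕ} (S : Finset (Fin n)) (x : Fin n → Bool) (i : Fin n) :
    char S (flipAt x i) = (if i ∈ S then (-1:ℝ) else 1) * char S x := by
  unfold char flipAt
  by_cases h : i ∈ S
  · rw [if_pos h, ← Finset.prod_erase_mul _ _ h, ← Finset.prod_erase_mul _ _ h]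
    have h1 : ∀ j ∈ S.erase i,
        (if Function.update x i (!x i) j then (1:ℝ) else -1) = (if x j then 1 else -1) := by
      intro j hj
      rw [Function.update_of_ne (Finset.ne_of_mem_erase hj)]
    rw [Finset.prod_congr rfl h1, Function.update_self]
    cases x i <;> simp <;> ring
  · rw [if_neg h, one_mul]
    apply Finset.prod_congr rfl
    intro j hj
    rw [Function.update_of_ne (by rintro rfl; exact h hj)]

theorem boolean_homogeneous_sensitivity (n d : ℕ) (c : Finset (Fin n) → ℝ)
    (hbool : ∀ x, eval' c x = 1 ∨ eval' c x = -1)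
    (hhom : ∀ S, c S ≠ 0 → S.card = d) :
    (∀ x, ∑ i : Fin n, |eval' c x - eval' c (flipAt x i)| / 2 = (d : ℝ)) ∧
    (∑ i : Fin n, Ex (fun x => |eval' c x - eval' c (flipAt x i)| / 2)) = (d : ℝ) := by
  have key : ∀ x, ∑ i : Fin n, (eval' c x - eval' c (flipAt x i)) = 2 * d * eval' c x := by
    intro x
    have h1 : ∀ i : Fin n, eval' c x - eval' c (flipAt x i)
        = ∑ S : Finset (Fin n), (if i ∈ S then 2 * (c S * char S x) else 0) := by
      intro i
      unfold eval'
      rw [← Finset.sum_sub_distrib]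
      apply Finset.sum_congr rfl
      intro S _
      rw [char_flip]
      by_cases h : i ∈ S <;> simp [h] <;> ring
    simp_rw [h1]
    rw [Finset.sum_comm]
    have h2 : ∀ S : Finset (Fin n),
        ∑ i : Fin n, (if i ∈ S then 2 * (c S * char S x) else 0)
        = 2 * d * (c S * char S x) := by
      intro S
      rw [Finset.sum_ite_mem, Finset.univ_inter, Finset.sum_const, nsmul_eq_mul]
      by_cases h : c S = 0
      · simp [h]
      · rw [hhom S h]; ring
    rw [Finset.sum_congr rfl (fun S _ => h2 S), ← Finset.mul_sum]
    rfl
  have habs : ∀ x (i : Fin n), |eval' c x - eval' c (flipAt x i)|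
      = eval' c x * (eval' c x - eval' c (flipAt x i)) := by
    intro x i
    rcases hbool x with h | h <;> rcases hbool (flipAt x i) with h' | h' <;>
      rw [h, h'] <;> norm_num
  have hsq : ∀ x, eval' c x * eval' c x = 1 := by
    intro x; rcases hbool x with h | h <;> rw [h] <;> norm_num
  have point : ∀ x, ∑ i : Fin n, |eval' c x - eval' c (flipAt x i)| / 2 = (d : ℝ) := by
    intro x
    calc ∑ i : Fin n, |eval' c x - eval' c (flipAt x i)| / 2
        = ∑ i : Fin n, eval' c x * (eval' c x - eval' c (flipAt x i)) / 2 := by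
          apply Finset.sum_congr rfl; intro i _; rw [habs]
      _ = eval' c x / 2 * ∑ i : Fin n, (eval' c x - eval' c (flipAt x i)) := by
          rw [Finset.mul_sum]; apply Finset.sum_congr rfl; intro i _; ring
      _ = eval' c x / 2 * (2 * d * eval' c x) := by rw [key]
      _ = (eval' c x * eval' c x) * d := by ring
      _ = d := by rw [hsq]; ring
  refine ⟨point, ?_⟩
  unfold Ex
  rw [← Finset.sum_div, Finset.sum_comm]
  have : ∀ x : Fin n → Bool, ∑ i : Fin n, |eval' c x - eval' c (flipAt x i)| / 2 = (d : ℝ) :=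
    point
  rw [Finset.sum_congr rfl (fun x _ => this x), Finset.sum_const, nsmul_eq_mul]
  simp [Fintype.card_fun]
end

section
/- For each even n, the function f : {-1,1}^{2n} → [-1,1] defined by f(x) = ((x_1+⋯+x_n)/n)^2 − ((x_{n+1}+⋯+x_{2n})/n)^2 is a homogeneous multilinear polynomial of degree 2, takes values in [-1,1], and satisfies Δ(f)(𝟏) = 4(1 − 1/n), where 𝟏 = (1,…,1). -/
open Finset

/-- The value of a cube coordinate: `true ↦ 1`, `false ↦ -1`. -/
noncomputable def bval (b : Bool) : ℝ := if b then 1 else -1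


lemma bval_sq (b : Bool) : bval b ^ 2 = 1 := by cases b <;> simp [bval]

lemma abs_bval (b : Bool) : |bval b| = 1 := by cases b <;> simp [bval]

lemma sq_sum_split (m : ℕ) (g : Fin m → ℝ) :
    (∑ i, g i) ^ 2 = ∑ i, (g i) ^ 2
      + 2 * ∑ i : Fin m, ∑ j : Fin m, if i < j then g i * g j else 0 := by
  have h : (∑ i, g i) ^ 2 = ∑ i : Fin m, ∑ j : Fin m, g i * g j := by
    rw [sq, Finset.sum_mul_sum]
  rw [h]
  have key : ∀ i j : Fin m, g i * g j =
      (if i = j then g i * g j else 0) + (if i < j then g i * g j else 0)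
      + (if j < i then g i * g j else 0) := by
    intro i j
    rcases lt_trichotomy i j with h | h | h
    · simp [h, h.ne, h.ne', not_lt_of_gt h]
    · simp [h, lt_irrefl]
    · simp [h, h.ne, h.ne', not_lt_of_gt h]
  calc ∑ i : Fin m, ∑ j : Fin m, g i * g j
      = ∑ i : Fin m, ∑ j : Fin m, ((if i = j then g i * g j else 0)
          + (if i < j then g i * g j else 0) + (if j < i then g i * g j else 0)) := by
        simp_rw [← key]
    _ = (∑ i : Fin m, ∑ j : Fin m, if i = j then g i * g j else 0)
        + (∑ i : Fin m, ∑ j : Fin m, if i < j then g i * g j else 0)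
        + (∑ i : Fin m, ∑ j : Fin m, if j < i then g i * g j else 0) := by
        simp_rw [Finset.sum_add_distrib]
    _ = ∑ i, (g i) ^ 2
        + 2 * ∑ i : Fin m, ∑ j : Fin m, if i < j then g i * g j else 0 := by
        have h1 : (∑ i : Fin m, ∑ j : Fin m, if i = j then g i * g j else 0)
            = ∑ i, (g i) ^ 2 := by
          refine Finset.sum_congr rfl fun i _ => ?_
          rw [Finset.sum_ite_eq Finset.univ i (fun j => g i * g j)]
          simp [sq]
        have h2 : (∑ i : Fin m, ∑ j : Fin m, if j < i then g i * g j else 0)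
            = ∑ i : Fin m, ∑ j : Fin m, if i < j then g i * g j else 0 := by
          rw [Finset.sum_comm]
          simp_rw [mul_comm]
        rw [h1, h2]; ring

lemma count_lt (n : ℕ) : (∑ i : Fin (2*n), if (i:ℕ) < n then (1:ℝ) else 0) = n := by
  rw [Fin.sum_univ_eq_sum_range (fun i => if i < n then (1:ℝ) else 0)]
  rw [← Finset.sum_filter]
  have : (Finset.range (2*n)).filter (· < n) = Finset.range n := by
    ext i; simp; omega
  simp [this]

lemma count_ge (n : ℕ) : (∑ i : Fin (2*n), if n ≤ (i:ℕ) then (1:ℝ) else 0) = n := by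
  rw [Fin.sum_univ_eq_sum_range (fun i => if n ≤ i then (1:ℝ) else 0)]
  rw [← Finset.sum_filter]
  have h : (Finset.range (2*n)).filter (n ≤ ·) = (Finset.range (2*n)) \ Finset.range n := by
    ext i; simp
  rw [h, Finset.sum_const, Finset.card_sdiff_of_subset (by simp; omega)]
  simp
  omega

lemma bval_flip_one {m : ℕ} (i j : Fin m) :
    bval (flipAt (fun _ => true) i j) = if j = i then -1 else 1 := by
  by_cases h : j = i
  · subst h; simp [flipAt, bval]
  · simp [flipAt, Function.update_of_ne h, bval, h]

lemma sum_flip_lt (n : ℕ) (i : Fin (2*n)) :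
    (∑ j : Fin (2*n), if (j:ℕ) < n then bval (flipAt (fun _ => true) i j) else 0)
      = n + (if (i:ℕ) < n then (-2:ℝ) else 0) := by
  have key : ∀ j : Fin (2*n),
      (if (j:ℕ) < n then bval (flipAt (fun _ => true) i j) else 0)
        = (if (j:ℕ) < n then (1:ℝ) else 0)
          + (if j = i then (if (j:ℕ) < n then (-2:ℝ) else 0) else 0) := by
    intro j
    rw [bval_flip_one]
    by_cases h : j = i
    · subst h; by_cases h2 : (j:ℕ) < n <;> simp [h2] <;> ring
    · simp [h]
  simp_rw [key, Finset.sum_add_distrib, count_lt]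
  rw [Finset.sum_ite_eq' Finset.univ i (fun j => if (j:ℕ) < n then (-2:ℝ) else 0)]
  simp

lemma sum_flip_ge (n : ℕ) (i : Fin (2*n)) :
    (∑ j : Fin (2*n), if n ≤ (j:ℕ) then bval (flipAt (fun _ => true) i j) else 0)
      = n + (if n ≤ (i:ℕ) then (-2:ℝ) else 0) := by
  have key : ∀ j : Fin (2*n),
      (if n ≤ (j:ℕ) then bval (flipAt (fun _ => true) i j) else 0)
        = (if n ≤ (j:ℕ) then (1:ℝ) else 0)
          + (if j = i then (if n ≤ (j:ℕ) then (-2:ℝ) else 0) else 0) := by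
    intro j
    rw [bval_flip_one]
    by_cases h : j = i
    · subst h; by_cases h2 : n ≤ (j:ℕ) <;> simp [h2] <;> ring
    · simp [h]
  simp_rw [key, Finset.sum_add_distrib, count_ge]
  rw [Finset.sum_ite_eq' Finset.univ i (fun j => if n ≤ (j:ℕ) then (-2:ℝ) else 0)]
  simp


set_option linter.unnecessarySeqFocus false in
theorem quadratic_example (n : ℕ) (hn : Even n) (hpos : 0 < n) :
    let f : (Fin (2 * n) → Bool) → ℝ := fun x =>
      ((∑ i : Fin (2 * n), if (i : ℕ) < n then bval (x i) else 0) / n) ^ 2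
      - ((∑ i : Fin (2 * n), if n ≤ (i : ℕ) then bval (x i) else 0) / n) ^ 2
    -- f is bounded in [-1,1]
    (∀ x, |f x| ≤ 1) ∧
    -- f is the homogeneous degree-2 multilinear polynomial
    -- (2/n²)(Σ_{i<j≤n} x_i x_j − Σ_{n<i<j} x_i x_j)
    (∀ x, f x = (2 / (n : ℝ) ^ 2) *
      ((∑ i : Fin (2 * n), ∑ j : Fin (2 * n),
          if i < j ∧ (i : ℕ) < n ∧ (j : ℕ) < n then bval (x i) * bval (x j) else 0)
       - (∑ i : Fin (2 * n), ∑ j : Fin (2 * n),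
          if i < j ∧ n ≤ (i : ℕ) ∧ n ≤ (j : ℕ) then bval (x i) * bval (x j) else 0))) ∧
    -- Δ(f)(𝟏) = 4(1 − 1/n)
    (∑ i : Fin (2 * n), |f (fun _ => true) - f (flipAt (fun _ => true) i)| / 2
      = 4 * (1 - 1 / (n : ℝ))) := by
  intro f
  have hn0 : (n:ℝ) ≠ 0 := Nat.cast_ne_zero.mpr hpos.ne'
  have hn1 : (1:ℝ) ≤ n := by exact_mod_cast hpos
  have h2n : (2*n : ℝ) = 2 * n := by push_cast; ring
  refine ⟨?_, ?_, ?_⟩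
  · -- boundedness
    intro x
    have habs1 : |∑ i : Fin (2*n), if (i:ℕ) < n then bval (x i) else 0| ≤ n := by
      calc |∑ i : Fin (2*n), if (i:ℕ) < n then bval (x i) else 0|
          ≤ ∑ i : Fin (2*n), |if (i:ℕ) < n then bval (x i) else 0| :=
            Finset.abs_sum_le_sum_abs _ _
        _ = ∑ i : Fin (2*n), if (i:ℕ) < n then (1:ℝ) else 0 := by
            refine Finset.sum_congr rfl fun i _ => ?_
            by_cases h : (i:ℕ) < n <;> simp [h, abs_bval]
        _ = n := count_lt n
    have habs2 : |∑ i : Fin (2*n), if n ≤ (i:ℕ) then bval (x i) else 0| ≤ n := by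
      calc |∑ i : Fin (2*n), if n ≤ (i:ℕ) then bval (x i) else 0|
          ≤ ∑ i : Fin (2*n), |if n ≤ (i:ℕ) then bval (x i) else 0| :=
            Finset.abs_sum_le_sum_abs _ _
        _ = ∑ i : Fin (2*n), if n ≤ (i:ℕ) then (1:ℝ) else 0 := by
            refine Finset.sum_congr rfl fun i _ => ?_
            by_cases h : n ≤ (i:ℕ) <;> simp [h, abs_bval]
        _ = n := count_ge n
    set A := ∑ i : Fin (2*n), if (i:ℕ) < n then bval (x i) else 0 with hA
    set B := ∑ i : Fin (2*n), if n ≤ (i:ℕ) then bval (x i) else 0 with hB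
    have hf : f x = (A/n)^2 - (B/n)^2 := rfl
    rw [hf, abs_le]
    have hA2 : (A/n)^2 ≤ 1 := by
      rw [div_pow, div_le_one (by positivity)]
      nlinarith [abs_nonneg A, sq_abs A]
    have hB2 : (B/n)^2 ≤ 1 := by
      rw [div_pow, div_le_one (by positivity)]
      nlinarith [abs_nonneg B, sq_abs B]
    constructor
    · nlinarith [sq_nonneg (A/n), sq_nonneg (B/n)]
    · nlinarith [sq_nonneg (A/n), sq_nonneg (B/n)]
  · -- multilinear expansion
    intro x
    have e1 : (∑ i : Fin (2*n), if (i:ℕ) < n then bval (x i) else 0) ^ 2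
        = n + 2 * ∑ i : Fin (2*n), ∑ j : Fin (2*n),
            if i < j ∧ (i:ℕ) < n ∧ (j:ℕ) < n then bval (x i) * bval (x j) else 0 := by
      rw [sq_sum_split]
      congr 1
      · calc (∑ i : Fin (2*n), (if (i:ℕ) < n then bval (x i) else 0) ^ 2)
            = ∑ i : Fin (2*n), if (i:ℕ) < n then (1:ℝ) else 0 := by
              refine Finset.sum_congr rfl fun i _ => ?_
              by_cases h : (i:ℕ) < n <;> simp [h, bval_sq]
          _ = n := count_lt n
      · congr 1
        refine Finset.sum_congr rfl fun i _ => Finset.sum_congr rfl fun j _ => ?_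
        by_cases h1 : i < j <;> by_cases h2 : (i:ℕ) < n <;> by_cases h3 : (j:ℕ) < n <;>
          simp [h1, h2, h3]
    have e2 : (∑ i : Fin (2*n), if n ≤ (i:ℕ) then bval (x i) else 0) ^ 2
        = n + 2 * ∑ i : Fin (2*n), ∑ j : Fin (2*n),
            if i < j ∧ n ≤ (i:ℕ) ∧ n ≤ (j:ℕ) then bval (x i) * bval (x j) else 0 := by
      rw [sq_sum_split]
      congr 1
      · calc (∑ i : Fin (2*n), (if n ≤ (i:ℕ) then bval (x i) else 0) ^ 2)
            = ∑ i : Fin (2*n), if n ≤ (i:ℕ) then (1:ℝ) else 0 := by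
              refine Finset.sum_congr rfl fun i _ => ?_
              by_cases h : n ≤ (i:ℕ) <;> simp [h, bval_sq]
          _ = n := count_ge n
      · congr 1
        refine Finset.sum_congr rfl fun i _ => Finset.sum_congr rfl fun j _ => ?_
        by_cases h1 : i < j <;> by_cases h2 : n ≤ (i:ℕ) <;> by_cases h3 : n ≤ (j:ℕ) <;>
          simp [h1, h2, h3]
    show ((∑ i : Fin (2 * n), if (i : ℕ) < n then bval (x i) else 0) / n) ^ 2
      - ((∑ i : Fin (2 * n), if n ≤ (i : ℕ) then bval (x i) else 0) / n) ^ 2 = _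
    rw [div_pow, div_pow, e1, e2]
    field_simp
    ring
  · -- influence sum
    have hf1 : f (fun _ => true) = 0 := by
      show ((∑ i : Fin (2 * n), if (i : ℕ) < n then bval true else 0) / n) ^ 2
        - ((∑ i : Fin (2 * n), if n ≤ (i : ℕ) then bval true else 0) / n) ^ 2 = 0
      have : bval true = 1 := by simp [bval]
      rw [this, count_lt, count_ge]
      ring
    have hsummand : ∀ i : Fin (2*n),
        |f (fun _ => true) - f (flipAt (fun _ => true) i)| / 2
          = ((4 * n - 4) / (n:ℝ)^2) / 2 := by
      intro i
      have hfi : f (flipAt (fun _ => true) i)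
          = ((n + (if (i:ℕ) < n then (-2:ℝ) else 0))/n)^2
            - ((n + (if n ≤ (i:ℕ) then (-2:ℝ) else 0))/n)^2 := by
        show ((∑ j : Fin (2 * n), if (j : ℕ) < n then bval (flipAt (fun _ => true) i j) else 0) / n) ^ 2
          - ((∑ j : Fin (2 * n), if n ≤ (j : ℕ) then bval (flipAt (fun _ => true) i j) else 0) / n) ^ 2 = _
        rw [sum_flip_lt, sum_flip_ge]
      have hkey : ((n:ℝ) - 2)^2 ≤ (n:ℝ)^2 := by nlinarith
      rw [hf1, hfi]
      by_cases hi : (i:ℕ) < n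
      · have hi' : ¬ n ≤ (i:ℕ) := by omega
        rw [if_pos hi, if_neg hi']
        have : (0:ℝ) - ((((n:ℝ) + -2)/n)^2 - (((n:ℝ) + 0)/n)^2)
            = ((n:ℝ)^2 - ((n:ℝ)-2)^2)/(n:ℝ)^2 := by field_simp; ring
        rw [this, abs_of_nonneg (div_nonneg (by linarith) (by positivity))]
        field_simp; ring
      · have hi' : n ≤ (i:ℕ) := by omega
        rw [if_neg hi, if_pos hi']
        have : (0:ℝ) - ((((n:ℝ) + 0)/n)^2 - (((n:ℝ) + -2)/n)^2)
            = -(((n:ℝ)^2 - ((n:ℝ)-2)^2)/(n:ℝ)^2) := by field_simp; ring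
        rw [this, abs_neg, abs_of_nonneg (div_nonneg (by linarith) (by positivity))]
        field_simp; ring
    calc ∑ i : Fin (2*n), |f (fun _ => true) - f (flipAt (fun _ => true) i)| / 2
        = ∑ _i : Fin (2*n), ((4 * (n:ℝ) - 4) / (n:ℝ)^2) / 2 :=
          Finset.sum_congr rfl fun i _ => hsummand i
      _ = (2*n : ℕ) * (((4 * (n:ℝ) - 4) / (n:ℝ)^2) / 2) := by
          rw [Finset.sum_const, Finset.card_univ, Fintype.card_fin]; simp
      _ = 4 * (1 - 1 / (n:ℝ)) := by
          push_cast
          field_simp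
end

section
/- Let f : {-1,1}^n → [-1,1] have degree at most d. Then E[(x_1 + x_2 + ⋯ + x_n) · f(x)] ≤ d, where the expectation is over the uniform measure on {-1,1}^n. Equivalently, the sum of the first-level Fourier coefficients Σ_{i=1}^n f̂({i}) is at most d. -/
open Finset

/-!
Let `μ_ρ` be the product measure on the cube whose coordinates have mean `ρ ∈ [-1, 1]`.
Then `ρ ↦ E_{μ_ρ}[f] = ∑_S f̂(S) ρ^|S|` is a real polynomial `p` of degree at most `d`, bounded
by `1` on `[-1, 1]`, whose coefficient of `ρ` is `E[(x₁ + ⋯ + xₙ) f(x)]`. Bernstein's inequality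
`|p'(0)| ≤ deg p · max_{[-1,1]} |p|` finishes the proof. It follows from M. Riesz's interpolation
formula `p'(0) = ∑ₖ w(vₖ) p(Im vₖ)`, where `vₖ` runs over the `2d` roots of `v ^ (2d) = -1` and
`∑ₖ |w(vₖ)| = d`; both identities reduce to `∑ₖ vₖ ^ s / (vₖ - 1) ^ 2 = d (s - 1 - d)` for
`1 ≤ s ≤ 2d + 1`.
-/

open Polynomial

theorem Int.alternating_sum_range_choose_mul (n : ℕ) :
    ∑ m ∈ Finset.range (n + 1), (-1 : ℤ) ^ m * n.choose m * m = if n = 1 then -1 else 0 := by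
  cases n with
  | zero => simp
  | succ n =>
    have hterm : ∀ m, (-1 : ℤ) ^ (m + 1) * (n + 1).choose (m + 1) * (m + 1 : ℕ) =
        -(n + 1) * ((-1) ^ m * n.choose m) := fun m => by
      rw [mul_assoc, ← Nat.cast_mul, ← Nat.add_one_mul_choose_eq]
      push_cast
      ring
    rw [sum_range_succ', sum_congr rfl fun m _ => hterm m, ← mul_sum,
      Int.alternating_sum_range_choose]
    split_ifs <;> simp_all

theorem Int.alternating_sum_range_choose_mul_sub (n : ℕ) :
    ∑ m ∈ Finset.range (n + 1), (-1 : ℤ) ^ m * n.choose m * (n - 2 * m) =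
      if n = 1 then 2 else 0 := by
  simp only [mul_sub, sum_sub_distrib, ← sum_mul, Int.alternating_sum_range_choose]
  simp only [mul_left_comm _ (2 : ℤ), ← mul_sum, Int.alternating_sum_range_choose_mul]
  split_ifs <;> simp_all

namespace IsPrimitiveRoot

variable {K : Type*} [Field K] {D : ℕ} {ζ : K}

theorem pow_two_mul_eq_neg_one (hζ : IsPrimitiveRoot ζ (4 * D)) (hD : 0 < D) :
    ζ ^ (2 * D) = -1 := by
  have h := hζ.pow_of_dvd (by omega : 2 * D ≠ 0) ⟨2, by ring⟩
  rw [Nat.div_eq_of_eq_mul_left (by omega) (by ring : 4 * D = 2 * (2 * D))] at h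
  exact h.eq_neg_one_of_two_right

theorem odd_pow_pow_two_mul_eq_neg_one (hζ : IsPrimitiveRoot ζ (4 * D)) (hD : 0 < D) (k : ℕ) :
    (ζ ^ (2 * k + 1)) ^ (2 * D) = -1 := by
  rw [← pow_mul, mul_comm, pow_mul, hζ.pow_two_mul_eq_neg_one hD, Odd.neg_one_pow ⟨k, rfl⟩]

theorem odd_pow_ne_one (hζ : IsPrimitiveRoot ζ (4 * D)) (hD : 0 < D) (k : ℕ) :
    ζ ^ (2 * k + 1) ≠ 1 := by
  intro h
  have h2 := hζ.odd_pow_pow_two_mul_eq_neg_one hD k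
  rw [h, one_pow, ← hζ.pow_two_mul_eq_neg_one hD] at h2
  exact hζ.pow_ne_one_of_pos_of_lt (by omega) (by omega) h2.symm

theorem sum_odd_pow_pow_eq_zero (hζ : IsPrimitiveRoot ζ (4 * D)) {s : ℕ} (hs0 : 0 < s)
    (hs : s < 2 * D) : ∑ k ∈ range (2 * D), (ζ ^ (2 * k + 1)) ^ s = 0 := by
  have hq : ζ ^ (2 * s) ≠ 1 := hζ.pow_ne_one_of_pos_of_lt (by omega) (by omega)
  have hterm : ∀ k, (ζ ^ (2 * k + 1)) ^ s = ζ ^ s * (ζ ^ (2 * s)) ^ k := fun k => by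
    rw [← pow_mul, ← pow_mul, ← pow_add]; ring_nf
  rw [sum_congr rfl fun k _ => hterm k, ← mul_sum, geom_sum_eq hq, ← pow_mul,
    show 2 * s * (2 * D) = 4 * D * s by ring, pow_mul, hζ.pow_eq_one, one_pow, sub_self,
    zero_div, mul_zero]

theorem sum_odd_pow_inv (hζ : IsPrimitiveRoot ζ (4 * D)) (f : K → K) :
    ∑ k ∈ range (2 * D), f (ζ ^ (2 * k + 1))⁻¹ = ∑ k ∈ range (2 * D), f (ζ ^ (2 * k + 1)) := by
  rw [← sum_range_reflect (fun k => f (ζ ^ (2 * k + 1)))]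
  refine sum_congr rfl fun k hk => ?_
  rw [mem_range] at hk
  congr 1
  refine inv_eq_of_mul_eq_one_right ?_
  rw [← pow_add, show 2 * k + 1 + (2 * (2 * D - 1 - k) + 1) = 4 * D by omega, hζ.pow_eq_one]

theorem two_ne_zero_of_four_mul (hζ : IsPrimitiveRoot ζ (4 * D)) (hD : 0 < D) : (2 : K) ≠ 0 := by
  intro h
  apply hζ.pow_ne_one_of_pos_of_lt (l := 2 * D) (by omega) (by omega)
  rw [hζ.pow_two_mul_eq_neg_one hD]
  linear_combination -h

theorem sum_odd_pow_div_sub_one (hζ : IsPrimitiveRoot ζ (4 * D)) (hD : 0 < D) :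
    ∑ k ∈ range (2 * D), ζ ^ (2 * k + 1) / (ζ ^ (2 * k + 1) - 1) = D := by
  have hpair : ∀ v : K, v ≠ 0 → v ≠ 1 → v / (v - 1) + v⁻¹ / (v⁻¹ - 1) = 1 := fun v hv0 hv1 => by
    have : v - 1 ≠ 0 := sub_ne_zero.mpr hv1
    field_simp
    ring
  have h2 : (2 : K) * ∑ k ∈ range (2 * D), ζ ^ (2 * k + 1) / (ζ ^ (2 * k + 1) - 1) = 2 * D := by
    rw [two_mul]
    nth_rw 2 [← hζ.sum_odd_pow_inv (fun v => v / (v - 1))]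
    rw [← sum_add_distrib, sum_congr rfl fun k _ =>
      hpair _ (pow_ne_zero _ (hζ.ne_zero (by omega))) (hζ.odd_pow_ne_one hD k)]
    simp
  exact mul_left_cancel₀ (hζ.two_ne_zero_of_four_mul hD) h2

theorem sum_odd_pow_pow_div_sub_one (hζ : IsPrimitiveRoot ζ (4 * D)) (hD : 0 < D) {s : ℕ}
    (hs1 : 1 ≤ s) (hs : s ≤ 2 * D) :
    ∑ k ∈ range (2 * D), (ζ ^ (2 * k + 1)) ^ s / (ζ ^ (2 * k + 1) - 1) = D := by
  induction s, hs1 using Nat.le_induction with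
  | base => simpa using hζ.sum_odd_pow_div_sub_one hD
  | succ s hs1 ih =>
    have hstep : ∀ v : K, v ≠ 1 → v ^ (s + 1) / (v - 1) = v ^ s / (v - 1) + v ^ s := fun v hv => by
      have : v - 1 ≠ 0 := sub_ne_zero.mpr hv
      field_simp
      ring
    rw [sum_congr rfl fun k _ => hstep _ (hζ.odd_pow_ne_one hD k), sum_add_distrib, ih (by omega),
      hζ.sum_odd_pow_pow_eq_zero (by omega) (by omega), add_zero]

theorem sum_odd_pow_pow_succ_div_sub_one_sq (hζ : IsPrimitiveRoot ζ (4 * D)) (hD : 0 < D)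
    {s : ℕ} (hs1 : 1 ≤ s) (hs : s ≤ 2 * D) :
    ∑ k ∈ range (2 * D), (ζ ^ (2 * k + 1)) ^ (s + 1) / (ζ ^ (2 * k + 1) - 1) ^ 2 =
      ∑ k ∈ range (2 * D), (ζ ^ (2 * k + 1)) ^ s / (ζ ^ (2 * k + 1) - 1) ^ 2 + (D : K) := by
  have hv : ∀ v : K, v ≠ 1 →
      v ^ (s + 1) / (v - 1) ^ 2 = v ^ s / (v - 1) ^ 2 + v ^ s / (v - 1) := fun v hv => by
    have : v - 1 ≠ 0 := sub_ne_zero.mpr hv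
    field_simp
    ring
  rw [sum_congr rfl fun k _ => hv _ (hζ.odd_pow_ne_one hD k), sum_add_distrib,
    hζ.sum_odd_pow_pow_div_sub_one hD hs1 hs]

theorem sum_odd_pow_pow_two_mul_add_one_div_sub_one_sq (hζ : IsPrimitiveRoot ζ (4 * D))
    (hD : 0 < D) :
    ∑ k ∈ range (2 * D), (ζ ^ (2 * k + 1)) ^ (2 * D + 1) / (ζ ^ (2 * k + 1) - 1) ^ 2 =
      -∑ k ∈ range (2 * D), (ζ ^ (2 * k + 1)) ^ 1 / (ζ ^ (2 * k + 1) - 1) ^ 2 := by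
  have hv : ∀ v : K, v ≠ 0 → v ≠ 1 → v ^ (2 * D) = -1 →
      v⁻¹ ^ (2 * D + 1) / (v⁻¹ - 1) ^ 2 = -(v ^ 1 / (v - 1) ^ 2) := fun v hv0 hv1 hvD => by
    have : v - 1 ≠ 0 := sub_ne_zero.mpr hv1
    rw [inv_pow, pow_succ, hvD]
    field_simp
    ring
  rw [← hζ.sum_odd_pow_inv (fun v => v ^ (2 * D + 1) / (v - 1) ^ 2), ← sum_neg_distrib]
  exact sum_congr rfl fun k _ => hv _ (pow_ne_zero _ (hζ.ne_zero (by omega)))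
    (hζ.odd_pow_ne_one hD k) (hζ.odd_pow_pow_two_mul_eq_neg_one hD k)

theorem sum_odd_pow_pow_div_sub_one_sq (hζ : IsPrimitiveRoot ζ (4 * D)) (hD : 0 < D) {s : ℕ}
    (hs1 : 1 ≤ s) (hs : s ≤ 2 * D + 1) :
    ∑ k ∈ range (2 * D), (ζ ^ (2 * k + 1)) ^ s / (ζ ^ (2 * k + 1) - 1) ^ 2 =
      D * ((s : K) - 1 - D) := by
  set T : ℕ → K := fun s => ∑ k ∈ range (2 * D), (ζ ^ (2 * k + 1)) ^ s / (ζ ^ (2 * k + 1) - 1) ^ 2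
  have hlinear : ∀ i ≤ 2 * D, T (1 + i) = T 1 + i * D := by
    intro i hi
    induction i with
    | zero => simp
    | succ i ih =>
      have hstep : T (1 + i + 1) = T (1 + i) + D :=
        hζ.sum_odd_pow_pow_succ_div_sub_one_sq hD (by omega) (by omega)
      rw [← add_assoc, hstep, ih (by omega)]
      push_cast
      ring
  have hT1 : T 1 = -(D * D) := by
    have h := hlinear (2 * D) le_rfl
    rw [add_comm 1, show T (2 * D + 1) = -T 1 from
      hζ.sum_odd_pow_pow_two_mul_add_one_div_sub_one_sq hD] at h
    refine mul_left_cancel₀ (hζ.two_ne_zero_of_four_mul hD) ?_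
    push_cast at h
    linear_combination -h
  obtain ⟨i, rfl⟩ := Nat.exists_eq_add_of_le hs1
  change T (1 + i) = _
  rw [hlinear i (by omega), hT1]
  push_cast
  ring

end IsPrimitiveRoot

section RieszInterpolation

open Complex

/-- The weights of M. Riesz's interpolation formula `T'(0) = ∑ₖ w(vₖ) T(θₖ)` for trigonometric
polynomials `T` of degree `≤ D`, with `vₖ = exp(iθₖ)` running over the roots of `v ^ (2D) = -1`. -/
noncomputable def rieszWeight (D : ℕ) (v : ℂ) : ℂ := I * v ^ (D + 1) / (D * (v - 1) ^ 2)

theorem Complex.ofReal_im_pow_eq_sum {v : ℂ} (hv : ‖v‖ = 1) {j D : ℕ} (hj : j ≤ D) :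
    (v.im : ℂ) ^ j = (2 * I)⁻¹ ^ j *
      ∑ r ∈ range (j + 1), (-1) ^ r * j.choose r * (v ^ (D + j - 2 * r) / v ^ D) := by
  have hv0 : v ≠ 0 := norm_ne_zero_iff.mp (by rw [hv]; exact one_ne_zero)
  rw [im_eq_sub_conj, ← inv_eq_conj hv, div_eq_mul_inv, mul_pow, mul_comm, sub_eq_neg_add,
    add_pow]
  congr 1
  refine sum_congr rfl fun r hr => ?_
  have hr : r ≤ j := Nat.lt_succ_iff.mp (mem_range.mp hr)
  have hpow : v ^ (D + j - 2 * r) / v ^ D = v ^ (j - r) / v ^ r := by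
    rw [div_eq_div_iff (pow_ne_zero _ hv0) (pow_ne_zero _ hv0), ← pow_add, ← pow_add]
    congr 1
    omega
  rw [hpow, neg_pow, inv_pow]
  ring

namespace IsPrimitiveRoot

variable {D : ℕ} {ζ : ℂ}

theorem norm_odd_pow (hζ : IsPrimitiveRoot ζ (4 * D)) (hD : 0 < D) (k : ℕ) :
    ‖ζ ^ (2 * k + 1)‖ = 1 := by
  rw [norm_pow, hζ.norm'_eq_one (by omega), one_pow]

theorem sum_rieszWeight_mul_pow_div_pow (hζ : IsPrimitiveRoot ζ (4 * D)) (hD : 0 < D) {m : ℕ}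
    (hm : m ≤ 2 * D) :
    ∑ k ∈ range (2 * D), rieszWeight D (ζ ^ (2 * k + 1)) * (ζ ^ (2 * k + 1)) ^ m /
      (ζ ^ (2 * k + 1)) ^ D = I * (m - D) := by
  have hterm : ∀ v : ℂ, v ≠ 0 →
      rieszWeight D v * v ^ m / v ^ D = I / D * (v ^ (m + 1) / (v - 1) ^ 2) := fun v hv => by
      rw [rieszWeight]
      field_simp
      ring
  rw [sum_congr rfl fun k _ => hterm _ (pow_ne_zero _ (hζ.ne_zero (by omega))), ← mul_sum,
    hζ.sum_odd_pow_pow_div_sub_one_sq hD (by omega) (by omega)]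
  have hD' : (D : ℂ) ≠ 0 := by exact_mod_cast hD.ne'
  push_cast
  field_simp
  ring

theorem sum_rieszWeight_mul_im_pow (hζ : IsPrimitiveRoot ζ (4 * D)) (hD : 0 < D) {j : ℕ}
    (hj : j ≤ D) :
    ∑ k ∈ range (2 * D), rieszWeight D (ζ ^ (2 * k + 1)) * ((ζ ^ (2 * k + 1)).im : ℂ) ^ j =
      if j = 1 then 1 else 0 := by
  calc ∑ k ∈ range (2 * D), rieszWeight D (ζ ^ (2 * k + 1)) * ((ζ ^ (2 * k + 1)).im : ℂ) ^ j
      = ∑ r ∈ range (j + 1), (2 * I)⁻¹ ^ j * ((-1) ^ r * j.choose r) *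
          ∑ k ∈ range (2 * D), rieszWeight D (ζ ^ (2 * k + 1)) *
            (ζ ^ (2 * k + 1)) ^ (D + j - 2 * r) / (ζ ^ (2 * k + 1)) ^ D := by
        simp only [ofReal_im_pow_eq_sum (hζ.norm_odd_pow hD _) hj, mul_sum]
        rw [sum_comm]
        refine sum_congr rfl fun r _ => sum_congr rfl fun k _ => ?_
        ring
    _ = ∑ r ∈ range (j + 1), (2 * I)⁻¹ ^ j * ((-1) ^ r * j.choose r) * (I * (j - 2 * r)) := by
        refine sum_congr rfl fun r hr => ?_
        have hr : r ≤ j := Nat.lt_succ_iff.mp (mem_range.mp hr)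
        rw [hζ.sum_rieszWeight_mul_pow_div_pow hD (by omega), Nat.cast_sub (by omega)]
        push_cast
        ring
    _ = (2 * I)⁻¹ ^ j * I *
          ((∑ r ∈ range (j + 1), (-1 : ℤ) ^ r * j.choose r * (j - 2 * r) : ℤ) : ℂ) := by
        push_cast
        rw [mul_sum]
        refine sum_congr rfl fun r _ => ?_
        ring
    _ = if j = 1 then 1 else 0 := by
        rw [Int.alternating_sum_range_choose_mul_sub]
        split_ifs with h
        · subst h
          field_simp
          norm_num
        · simp

theorem sum_norm_rieszWeight (hζ : IsPrimitiveRoot ζ (4 * D)) (hD : 0 < D) :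
    ∑ k ∈ range (2 * D), ‖rieszWeight D (ζ ^ (2 * k + 1))‖ = D := by
  have hD' : (D : ℂ) ≠ 0 := by exact_mod_cast hD.ne'
  have hterm : ∀ v : ℂ, ‖v‖ = 1 → v ≠ 1 →
      (‖rieszWeight D v‖ : ℂ) = -(D : ℂ)⁻¹ * (v ^ 1 / (v - 1) ^ 2) := fun v hv hv1 => by
    have hv0 : v ≠ 0 := norm_ne_zero_iff.mp (by rw [hv]; exact one_ne_zero)
    have hv1' : v - 1 ≠ 0 := sub_ne_zero.mpr hv1
    rw [rieszWeight, norm_div, norm_mul, norm_mul, norm_I, norm_pow, hv, norm_pow,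
      Complex.norm_natCast]
    push_cast
    rw [← mul_conj', map_sub, map_one, ← inv_eq_conj hv]
    field_simp
    ring
  apply ofReal_injective
  push_cast
  rw [sum_congr rfl fun k _ => hterm _ (hζ.norm_odd_pow hD k) (hζ.odd_pow_ne_one hD k), ← mul_sum,
    hζ.sum_odd_pow_pow_div_sub_one_sq hD le_rfl (by omega)]
  field_simp
  push_cast
  ring

end IsPrimitiveRoot

theorem IsPrimitiveRoot.coeff_one_eq_sum_rieszWeight_mul_eval {D : ℕ} {ζ : ℂ}
    (hζ : IsPrimitiveRoot ζ (4 * D)) (hD : 0 < D) {p : ℝ[X]} (hp : p.natDegree ≤ D) :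
    (p.coeff 1 : ℂ) =
      ∑ k ∈ range (2 * D), rieszWeight D (ζ ^ (2 * k + 1)) * p.eval (ζ ^ (2 * k + 1)).im := by
  simp only [eval_eq_sum_range' (Nat.lt_succ_of_le hp), ofReal_sum, ofReal_mul, ofReal_pow,
    mul_sum]
  rw [sum_comm]
  have hcoeff : ∀ i ∈ range (D + 1), ∑ k ∈ range (2 * D), rieszWeight D (ζ ^ (2 * k + 1)) *
      ((p.coeff i : ℂ) * ((ζ ^ (2 * k + 1)).im : ℂ) ^ i) = if i = 1 then (p.coeff 1 : ℂ) else 0 :=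
    fun i hi => by
      simp only [mul_left_comm _ (p.coeff i : ℂ), ← mul_sum,
        hζ.sum_rieszWeight_mul_im_pow hD (Nat.lt_succ_iff.mp (mem_range.mp hi))]
      split_ifs with h <;> simp [h]
  rw [sum_congr rfl hcoeff, sum_ite_eq', if_pos (mem_range.mpr (by omega))]

theorem Polynomial.abs_coeff_one_le_natDegree_mul {p : ℝ[X]} {M : ℝ}
    (hp : ∀ t ∈ Set.Icc (-1 : ℝ) 1, |p.eval t| ≤ M) : |p.coeff 1| ≤ p.natDegree * M := by
  rcases Nat.eq_zero_or_pos p.natDegree with hD | hD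
  · rw [coeff_eq_zero_of_natDegree_lt (by omega), hD]
    simp
  obtain ⟨ζ, hζ⟩ : ∃ ζ : ℂ, IsPrimitiveRoot ζ (4 * p.natDegree) :=
    ⟨_, Complex.isPrimitiveRoot_exp _ (by omega)⟩
  have hnode : ∀ k, (ζ ^ (2 * k + 1)).im ∈ Set.Icc (-1 : ℝ) 1 := fun k =>
    abs_le.mp ((abs_im_le_norm _).trans (hζ.norm_odd_pow hD k).le)
  calc |p.coeff 1| = ‖(p.coeff 1 : ℂ)‖ := (norm_real _).symm
    _ ≤ ∑ k ∈ range (2 * p.natDegree), ‖rieszWeight p.natDegree (ζ ^ (2 * k + 1))‖ * M := by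
        rw [hζ.coeff_one_eq_sum_rieszWeight_mul_eval hD le_rfl]
        refine (norm_sum_le _ _).trans (sum_le_sum fun k _ => ?_)
        rw [norm_mul, norm_real, Real.norm_eq_abs]
        exact mul_le_mul_of_nonneg_left (hp _ (hnode k)) (norm_nonneg _)
    _ = p.natDegree * M := by rw [← sum_mul, hζ.sum_norm_rieszWeight hD]

end RieszInterpolation

theorem Polynomial.coeff_one_prod_one_add_C_mul_X {R ι : Type*} [CommRing R] (s : Finset ι)
    (a : ι → R) : (∏ i ∈ s, (1 + C (a i) * X)).coeff 1 = ∑ i ∈ s, a i := by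
  induction s using Finset.cons_induction with
  | empty => simp [coeff_one]
  | cons i s hi ih =>
    rw [prod_cons, sum_cons, add_mul, one_mul, coeff_add, mul_assoc, coeff_C_mul, coeff_X_mul,
      coeff_zero_prod, ih]
    simp [add_comm]

section BiasedCube

variable {n : ℕ}

/-- `(biasedExpectation g).eval ρ` is the expectation of `g` when the coordinates are independent
with mean `ρ` (each equals `1` with probability `(1 + ρ) / 2`). -/
noncomputable def biasedExpectation (g : (Fin n → Bool) → ℝ) : ℝ[X] :=
  ∑ x, C (g x / 2 ^ n) * ∏ i, (1 + C (bval (x i)) * X)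

theorem coeff_one_biasedExpectation (g : (Fin n → Bool) → ℝ) :
    (biasedExpectation g).coeff 1 = Ex (fun x => (∑ i, bval (x i)) * g x) := by
  simp only [biasedExpectation, finsetSum_coeff, coeff_C_mul, coeff_one_prod_one_add_C_mul_X,
    Ex, sum_div]
  refine sum_congr rfl fun x _ => ?_
  ring

theorem abs_eval_biasedExpectation_le {g : (Fin n → Bool) → ℝ} {M : ℝ} (hg : ∀ x, |g x| ≤ M)
    {ρ : ℝ} (hρ : ρ ∈ Set.Icc (-1 : ℝ) 1) : |(biasedExpectation g).eval ρ| ≤ M := by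
  set μ : (Fin n → Bool) → ℝ := fun x => ∏ i, (1 + bval (x i) * ρ) / 2
  have hμ0 : ∀ x, 0 ≤ μ x := fun x => prod_nonneg fun i _ => by
    cases x i <;> norm_num [bval] <;> linarith [hρ.1, hρ.2]
  have hμ1 : ∑ x, μ x = 1 := by
    rw [← Fintype.prod_sum (fun (_ : Fin n) b => (1 + bval b * ρ) / 2)]
    simp only [Fintype.sum_bool, bval, if_true, Bool.false_eq_true, if_false]
    exact prod_eq_one fun i _ => by ring
  have heval : (biasedExpectation g).eval ρ = ∑ x, g x * μ x := by
    simp only [biasedExpectation, eval_finsetSum, eval_mul, eval_C, eval_prod, eval_add, eval_one,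
      eval_X, μ, prod_div_distrib, prod_const, card_univ, Fintype.card_fin]
    refine sum_congr rfl fun x _ => ?_
    ring
  calc |(biasedExpectation g).eval ρ| ≤ ∑ x, |g x| * μ x := by
        rw [heval]
        refine (abs_sum_le_sum_abs _ _).trans_eq (sum_congr rfl fun x _ => ?_)
        rw [abs_mul, abs_of_nonneg (hμ0 x)]
    _ ≤ ∑ x, M * μ x := sum_le_sum fun x _ => mul_le_mul_of_nonneg_right (hg x) (hμ0 x)
    _ = M := by rw [← mul_sum, hμ1, mul_one]

theorem biasedExpectation_char (S : Finset (Fin n)) : biasedExpectation (char S) = X ^ S.card := by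
  have hchar : ∀ x, char S x = ∏ i, if i ∈ S then bval (x i) else 1 := fun x =>
    (Fintype.prod_ite_mem S _).symm
  have hfactor : ∀ i, ∑ b, C (if i ∈ S then bval b else 1) * (1 + C (bval b) * X) =
      C 2 * if i ∈ S then X else 1 := fun i => by
    split_ifs <;> simp only [Fintype.sum_bool, bval, if_true, Bool.false_eq_true, if_false,
      map_one, map_neg, map_ofNat] <;> ring
  calc biasedExpectation (char S)
      = C (2 ^ n)⁻¹ * ∑ x : Fin n → Bool,
          ∏ i, C (if i ∈ S then bval (x i) else 1) * (1 + C (bval (x i)) * X) := by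
        simp only [biasedExpectation, hchar, div_eq_inv_mul, C_mul, map_prod, mul_sum,
          prod_mul_distrib, mul_assoc]
    _ = C (2 ^ n)⁻¹ * ∏ i, C 2 * if i ∈ S then X else 1 := by
        rw [← Fintype.prod_sum (fun i b => C (if i ∈ S then bval b else 1) * (1 + C (bval b) * X))]
        simp only [hfactor]
    _ = X ^ S.card := by
        rw [prod_mul_distrib, Fintype.prod_ite_mem, prod_const, prod_const, card_univ,
          Fintype.card_fin, ← mul_assoc, ← C_pow, ← C_mul, inv_mul_cancel₀ (by positivity), C_1,
          one_mul]

theorem biasedExpectation_eval' (c : Finset (Fin n) → ℝ) :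
    biasedExpectation (eval' c) = ∑ S, C (c S) * X ^ S.card := by
  simp only [← biasedExpectation_char, biasedExpectation, eval', sum_div, map_sum, sum_mul, mul_sum]
  rw [sum_comm]
  refine sum_congr rfl fun S _ => sum_congr rfl fun x _ => ?_
  rw [mul_div_assoc, C_mul, mul_assoc]

theorem natDegree_biasedExpectation_eval'_le {c : Finset (Fin n) → ℝ} {d : ℕ}
    (hdeg : ∀ S, c S ≠ 0 → S.card ≤ d) : (biasedExpectation (eval' c)).natDegree ≤ d := by
  rw [biasedExpectation_eval']
  refine natDegree_sum_le_of_forall_le _ _ fun S _ => ?_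
  by_cases hS : c S = 0
  · simp [hS]
  · exact (natDegree_C_mul_X_pow_le _ _).trans (hdeg S hS)

end BiasedCube

theorem first_level_sum_le_degree (n d : ℕ) (c : Finset (Fin n) → ℝ)
    (hdeg : ∀ S, c S ≠ 0 → S.card ≤ d)
    (hbd : ∀ x, |eval' c x| ≤ 1) :
    Ex (fun x => (∑ i, bval (x i)) * eval' c x) ≤ (d : ℝ) := by
  set p := biasedExpectation (eval' c)
  calc Ex (fun x => (∑ i, bval (x i)) * eval' c x) = p.coeff 1 :=
        (coeff_one_biasedExpectation _).symm
    _ ≤ |p.coeff 1| := le_abs_self _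
    _ ≤ p.natDegree * 1 :=
        abs_coeff_one_le_natDegree_mul fun t ht => abs_eval_biasedExpectation_le hbd ht
    _ ≤ d := by
        rw [mul_one]
        exact_mod_cast natDegree_biasedExpectation_eval'_le hdeg
end

section
/- For every f : {-1,1}^n → ℝ and α ∈ (0,1], ‖T_α f‖_1 ≥ α^n ‖f‖_1, where T_α is the noise operator multiplying the Fourier coefficient f̂(S) by α^{|S|}, and ‖·‖_1 is the L1 norm with respect to the uniform measure on {-1,1}^n. -/
/-!
For `α > 0` the noise operator `T_α` is inverted by `T_{1/α}`, and for every `β` the operator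
`T_β` is given by the signed product kernel `K_β(x, y) = ∏ᵢ (1 + β xᵢ yᵢ) / 2`. For `β ≥ 1` the
total variation of each factor is `|(1 + β) / 2| + |(1 - β) / 2| = β`, so
`‖T_β g‖₁ ≤ β ^ n ‖g‖₁`. Taking `β = 1/α` and `g = T_α f` gives `‖f‖₁ ≤ α⁻¹ ^ n ‖T_α f‖₁`.
-/

open Finset

noncomputable def boolSign (b : Bool) : ℝ := if b then 1 else -1

@[simp] lemma boolSign_true : boolSign true = 1 := rfl

@[simp] lemma boolSign_false : boolSign false = -1 := rfl

section

variable {n : ℕ}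

lemma char_eq_prod_ite (S : Finset (Fin n)) (y : Fin n → Bool) :
    char S y = ∏ i, if i ∈ S then boolSign (y i) else 1 := by
  rw [prod_ite_mem, univ_inter]
  rfl

noncomputable def noiseKernel (β : ℝ) (x y : Fin n → Bool) : ℝ :=
  ∏ i, (1 + β * boolSign (x i) * boolSign (y i)) / 2

lemma sum_char_mul_noiseKernel (β : ℝ) (S : Finset (Fin n)) (x : Fin n → Bool) :
    ∑ y, char S y * noiseKernel β x y = β ^ S.card * char S x := by
  have hcoord : ∀ i, ∑ b : Bool,
      (if i ∈ S then boolSign b else 1) * ((1 + β * boolSign (x i) * boolSign b) / 2)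
        = if i ∈ S then β * boolSign (x i) else 1 := by
    intro i
    by_cases hi : i ∈ S <;> cases x i <;>
      simp only [Fintype.sum_bool, boolSign_true, boolSign_false, hi, if_true, if_false] <;> ring
  simp_rw [char_eq_prod_ite, noiseKernel, ← prod_mul_distrib]
  rw [← Fintype.prod_sum fun i b =>
    (if i ∈ S then boolSign b else 1) * ((1 + β * boolSign (x i) * boolSign b) / 2)]
  simp_rw [hcoord, prod_ite_mem, univ_inter, prod_mul_distrib, prod_const]

lemma sum_noiseKernel_mul_eval' (β : ℝ) (c : Finset (Fin n) → ℝ) (x : Fin n → Bool) :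
    ∑ y, noiseKernel β x y * eval' c y = eval' (fun S => β ^ S.card * c S) x := by
  simp only [eval', mul_sum]
  rw [sum_comm]
  refine sum_congr rfl fun S _ => ?_
  calc ∑ y, noiseKernel β x y * (c S * char S y)
      = c S * ∑ y, char S y * noiseKernel β x y := by
        rw [mul_sum]
        exact sum_congr rfl fun y _ => by ring
    _ = β ^ S.card * c S * char S x := by
        rw [sum_char_mul_noiseKernel]
        ring

lemma sum_abs_noiseKernel {β : ℝ} (hβ : 1 ≤ β) (y : Fin n → Bool) :
    ∑ x, |noiseKernel β x y| = β ^ n := by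
  have hcoord : ∀ i, ∑ b : Bool, |(1 + β * boolSign b * boolSign (y i)) / 2| = β := by
    have hplus : |(1 + β) / 2| = (1 + β) / 2 := abs_of_nonneg (by linarith)
    have hminus : |(1 + -β) / 2| = (β - 1) / 2 := by
      rw [abs_of_nonpos (by linarith)]
      ring
    intro i
    cases y i <;>
      simp only [Fintype.sum_bool, boolSign_true, boolSign_false, mul_one, mul_neg, neg_neg,
        hplus, hminus] <;> ring
  simp_rw [noiseKernel, abs_prod]
  rw [← Fintype.prod_sum fun i b => |(1 + β * boolSign b * boolSign (y i)) / 2|]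
  simp_rw [hcoord]
  rw [prod_const, card_univ, Fintype.card_fin]

lemma sum_abs_eval'_le {β : ℝ} (hβ : 1 ≤ β) (c : Finset (Fin n) → ℝ) :
    ∑ x, |eval' (fun S => β ^ S.card * c S) x| ≤ β ^ n * ∑ y, |eval' c y| :=
  calc ∑ x, |eval' (fun S => β ^ S.card * c S) x|
      = ∑ x, |∑ y, noiseKernel β x y * eval' c y| := by
        simp_rw [sum_noiseKernel_mul_eval']
    _ ≤ ∑ x, ∑ y, |noiseKernel β x y| * |eval' c y| := by
        gcongr with x
        simpa only [abs_mul] using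
          abs_sum_le_sum_abs (fun y => noiseKernel β x y * eval' c y) univ
    _ = ∑ y, (∑ x, |noiseKernel β x y|) * |eval' c y| := by
        rw [sum_comm]
        simp_rw [sum_mul]
    _ = β ^ n * ∑ y, |eval' c y| := by
        simp_rw [sum_abs_noiseKernel hβ, mul_sum]

end

theorem noise_L1_lower_bound (n : ℕ) (c : Finset (Fin n) → ℝ) (α : ℝ)
    (h0 : 0 < α) (h1 : α ≤ 1) :
    α ^ n * Ex (fun x => |eval' c x|)
      ≤ Ex (fun x => |eval' (fun S => α ^ S.card * c S) x|) := by
  have hinv : (fun S : Finset (Fin n) => α⁻¹ ^ S.card * (α ^ S.card * c S)) = c := by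
    funext S
    rw [← mul_assoc, ← mul_pow, inv_mul_cancel₀ h0.ne', one_pow, one_mul]
  have hbound := sum_abs_eval'_le ((one_le_inv₀ h0).2 h1) (fun S => α ^ S.card * c S)
  rw [hinv] at hbound
  have hscaled := mul_le_mul_of_nonneg_left hbound (pow_nonneg h0.le n)
  rw [← mul_assoc, ← mul_pow, mul_inv_cancel₀ h0.ne', one_pow, one_mul] at hscaled
  unfold Ex
  rw [← mul_div_assoc]
  gcongr
end

section
/- Suppose f : {-1,1}^n → [-1,1] has degree at most d, is invariant under a transitive group of coordinate permutations, and assume the hypercontractive bound ‖g‖_2 ≤ e^{d}‖g‖_1 for all degree-d functions g and the bound Inf^{(1)}[f] ≤ d². Then for all 1 ≤ p ≤ 2, Inf^{(p)}[f] ≤ d^{2p} e^{pd} / n^{p−1}. In particular Var[f] ≤ Inf^{(2)}[f] ≤ d⁴ e^{2d}/n. -/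
/-!
The `i`-th Laplacian `L_i f = (f - f ∘ flip_i) / 2` has Fourier coefficients `f̂(S)` for `S ∋ i`
and `0` otherwise, so it has degree at most `d` and the hypercontractive bound
`E (L_i f)² ≤ e^{2d} (E |L_i f|)²` applies to it. Combined with the interpolation
`E |g|^p ≤ (E |g|)^{2-p} (E g²)^{p-1}` (pointwise weighted AM–GM) this gives
`E |L_i f|^p ≤ (e^d E |L_i f|)^p`. By transitivity all `n` values `E |L_i f|` agree, so each is at
most `d² / n`; summing over `i` gives the first bound, and `p = 2` the last one.
The Poincaré inequality is Parseval: `Var f = ∑_{S ≠ ∅} f̂(S)² ≤ ∑_S |S| f̂(S)² = ∑_i E (L_i f)²`.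
-/

open Finset

open Real

namespace TransitiveInvariant

variable {n : ℕ}

lemma Ex_nonneg {g : (Fin n → Bool) → ℝ} (hg : ∀ x, 0 ≤ g x) : 0 ≤ Ex g :=
  div_nonneg (sum_nonneg fun x _ => hg x) (by positivity)

lemma Ex_pos {g : (Fin n → Bool) → ℝ} (hg : ∀ x, 0 ≤ g x) {x₀ : Fin n → Bool} (hx₀ : 0 < g x₀) :
    0 < Ex g :=
  div_pos (sum_pos' (fun x _ => hg x) ⟨x₀, mem_univ _, hx₀⟩) (by positivity)

lemma Ex_mono {g h : (Fin n → Bool) → ℝ} (hgh : ∀ x, g x ≤ h x) : Ex g ≤ Ex h := by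
  unfold Ex
  gcongr with x
  exact hgh x

lemma Ex_add (g h : (Fin n → Bool) → ℝ) : Ex (fun x => g x + h x) = Ex g + Ex h := by
  simp only [Ex, sum_add_distrib, add_div]

lemma Ex_const_mul (a : ℝ) (g : (Fin n → Bool) → ℝ) : Ex (fun x => a * g x) = a * Ex g := by
  simp only [Ex, ← mul_sum, mul_div_assoc]

lemma Ex_sum {ι : Type*} (s : Finset ι) (g : ι → (Fin n → Bool) → ℝ) :
    Ex (fun x => ∑ t ∈ s, g t x) = ∑ t ∈ s, Ex (g t) := by
  simp only [Ex, sum_comm (s := s), sum_div]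

lemma Ex_comp_perm (σ : Equiv.Perm (Fin n)) (g : (Fin n → Bool) → ℝ) :
    Ex (fun x => g (fun k => x (σ k))) = Ex g := by
  unfold Ex
  congr 1
  exact Fintype.sum_equiv (Equiv.arrowCongr σ.symm (Equiv.refl Bool)) _ _ fun x => rfl

lemma char_flipAt (S : Finset (Fin n)) (x : Fin n → Bool) (i : Fin n) :
    char S (flipAt x i) = (if i ∈ S then -1 else 1) * char S x := by
  have hoff : ∀ k ∈ S.erase i, (if flipAt x i k then (1 : ℝ) else -1) = if x k then 1 else -1 :=
    fun k hk => by rw [flipAt, Function.update_of_ne (ne_of_mem_erase hk)]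
  split_ifs with h
  · rw [char, char, ← mul_prod_erase S _ h, ← mul_prod_erase S _ h, prod_congr rfl hoff,
      flipAt, Function.update_self]
    cases x i <;> simp
  · rw [one_mul, char, char, ← erase_eq_of_notMem h, prod_congr rfl hoff]

lemma sum_char_mul_char (S T : Finset (Fin n)) :
    ∑ x : Fin n → Bool, char S x * char T x = if S = T then (2 : ℝ) ^ n else 0 := by
  let sgn : Finset (Fin n) → Fin n → Bool → ℝ :=
    fun U i b => if i ∈ U then (if b then 1 else -1) else 1
  have hchar : ∀ U x, char U x = ∏ i, sgn U i (x i) := fun U x => by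
    rw [prod_ite_mem, univ_inter, char]
  have hfactor : ∀ i, ∑ b : Bool, sgn S i b * sgn T i b = if (i ∈ S ↔ i ∈ T) then 2 else 0 := by
    intro i
    by_cases hS : i ∈ S <;> by_cases hT : i ∈ T <;> norm_num [sgn, hS, hT]
  calc ∑ x : Fin n → Bool, char S x * char T x
      = ∏ i, ∑ b : Bool, sgn S i b * sgn T i b := by
        simp only [Fintype.prod_sum, hchar, ← prod_mul_distrib]
    _ = if S = T then (2 : ℝ) ^ n else 0 := by
        simp only [hfactor]
        split_ifs with hST
        · simp [hST]
        · obtain ⟨i, hi⟩ : ∃ i, ¬(i ∈ S ↔ i ∈ T) := by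
            by_contra! h
            exact hST (Finset.ext h)
          exact prod_eq_zero (mem_univ i) (if_neg hi)

lemma Ex_eval'_mul_char (c : Finset (Fin n) → ℝ) (T : Finset (Fin n)) :
    Ex (fun x => eval' c x * char T x) = c T := by
  simp only [Ex, eval', sum_mul, mul_assoc]
  rw [sum_comm]
  simp only [← mul_sum, sum_char_mul_char, mul_ite, mul_zero, sum_ite_eq', mem_univ, if_true]
  field_simp

lemma Ex_eval' (c : Finset (Fin n) → ℝ) : Ex (eval' c) = c ∅ := by
  simpa [char] using Ex_eval'_mul_char c ∅

lemma Ex_eval'_sq (c : Finset (Fin n) → ℝ) :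
    Ex (fun x => eval' c x ^ 2) = ∑ S, c S ^ 2 := by
  have hexp : (fun x => eval' c x ^ 2) = fun x => ∑ S, c S * (eval' c x * char S x) := by
    funext x
    rw [sq]
    nth_rw 2 [eval']
    rw [mul_sum]
    exact sum_congr rfl fun S _ => by ring
  rw [hexp, Ex_sum]
  simp only [Ex_const_mul, Ex_eval'_mul_char, sq]

def laplacian (c : Finset (Fin n) → ℝ) (i : Fin n) (S : Finset (Fin n)) : ℝ :=
  if i ∈ S then c S else 0

lemma eval'_laplacian (c : Finset (Fin n) → ℝ) (i : Fin n) (x : Fin n → Bool) :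
    eval' (laplacian c i) x = (eval' c x - eval' c (flipAt x i)) / 2 := by
  simp only [eval', ← sum_sub_distrib, sum_div, char_flipAt, laplacian]
  refine sum_congr rfl fun S _ => ?_
  split_ifs <;> ring

lemma laplacian_degree_le {c : Finset (Fin n) → ℝ} {d : ℕ} (hdeg : ∀ S, c S ≠ 0 → S.card ≤ d)
    (i : Fin n) (S : Finset (Fin n)) (hS : laplacian c i S ≠ 0) : S.card ≤ d := by
  unfold laplacian at hS
  split_ifs at hS
  exacts [hdeg S hS, absurd rfl hS]

lemma sum_Ex_laplacian_sq (c : Finset (Fin n) → ℝ) :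
    ∑ i, Ex (fun x => eval' (laplacian c i) x ^ 2) = ∑ S, (S.card : ℝ) * c S ^ 2 := by
  simp only [Ex_eval'_sq, laplacian, ite_pow, zero_pow two_ne_zero]
  rw [sum_comm]
  simp only [sum_ite_mem, univ_inter, sum_const, nsmul_eq_mul]

lemma variance_le_sum_Ex_laplacian_sq (c : Finset (Fin n) → ℝ) :
    Ex (fun x => eval' c x ^ 2) - Ex (eval' c) ^ 2
      ≤ ∑ i, Ex (fun x => eval' (laplacian c i) x ^ 2) := by
  rw [Ex_eval'_sq, Ex_eval', sum_Ex_laplacian_sq, ← add_sum_erase _ _ (mem_univ ∅),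
    ← add_sum_erase _ _ (mem_univ ∅), card_empty, Nat.cast_zero, zero_mul, zero_add,
    add_sub_cancel_left]
  refine sum_le_sum fun S hS => le_mul_of_one_le_left (sq_nonneg _) ?_
  exact_mod_cast card_pos.2 (nonempty_of_ne_empty (ne_of_mem_erase hS))

def IsTransitiveInvariant (c : Finset (Fin n) → ℝ) : Prop :=
  ∀ i j : Fin n, ∃ σ : Equiv.Perm (Fin n),
    σ i = j ∧ ∀ x : Fin n → Bool, eval' c (fun k => x (σ k)) = eval' c x

lemma Ex_comp_laplacian_eq_of_transitive {c : Finset (Fin n) → ℝ}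
    (htrans : IsTransitiveInvariant c) (φ : ℝ → ℝ) (i j : Fin n) :
    Ex (fun x => φ (eval' (laplacian c i) x)) = Ex (fun x => φ (eval' (laplacian c j) x)) := by
  obtain ⟨σ, rfl, hσ⟩ := htrans i j
  have hflip : ∀ x : Fin n → Bool, (fun k => flipAt x (σ i) (σ k)) = flipAt (fun k => x (σ k)) i :=
    fun x => funext fun k => by simp only [flipAt, Function.update_apply, σ.apply_eq_iff_eq]
  rw [← Ex_comp_perm σ]
  congr 1
  funext x
  simp only [eval'_laplacian, hσ, ← hflip]

lemma Ex_abs_laplacian_le_of_transitive (hn : 0 < n) {c : Finset (Fin n) → ℝ}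
    (htrans : IsTransitiveInvariant c) {M : ℝ}
    (hM : ∑ i, Ex (fun x => |eval' (laplacian c i) x|) ≤ M) (i : Fin n) :
    Ex (fun x => |eval' (laplacian c i) x|) ≤ M / n := by
  rw [le_div_iff₀ (Nat.cast_pos.2 hn), mul_comm]
  calc n * Ex (fun x => |eval' (laplacian c i) x|)
      = ∑ j, Ex (fun x => |eval' (laplacian c j) x|) := by
        simp only [Ex_comp_laplacian_eq_of_transitive htrans (fun t => |t|) _ i, sum_const,
          card_univ, Fintype.card_fin, nsmul_eq_mul]
    _ ≤ M := hM

lemma rpow_le_young_interpolation {p t A B : ℝ} (hp1 : 1 ≤ p) (hp2 : p ≤ 2) (ht : 0 ≤ t)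
    (hA : 0 < A) (hB : 0 < B) :
    t ^ p ≤ ((2 - p) * (t / A) + (p - 1) * (t ^ 2 / B)) * (A ^ (2 - p) * B ^ (p - 1)) := by
  have hsplit :
      t ^ p = (t / A) ^ (2 - p) * (t ^ 2 / B) ^ (p - 1) * (A ^ (2 - p) * B ^ (p - 1)) := by
    have hA' : A ^ (2 - p) ≠ 0 := (rpow_pos_of_pos hA _).ne'
    have hB' : B ^ (p - 1) ≠ 0 := (rpow_pos_of_pos hB _).ne'
    conv_lhs => rw [show p = (2 - p) + (2 : ℕ) * (p - 1) by push_cast; ring]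
    rw [rpow_add' ht (by push_cast; linarith), rpow_mul ht, rpow_natCast, div_rpow ht hA.le,
      div_rpow (sq_nonneg t) hB.le]
    field_simp
  rw [hsplit]
  gcongr
  exact geom_mean_le_arith_mean2_weighted (by linarith) (by linarith) (by positivity)
    (by positivity) (by ring)

lemma Ex_abs_rpow_le_interpolation {p : ℝ} (hp1 : 1 ≤ p) (hp2 : p ≤ 2) (g : (Fin n → Bool) → ℝ) :
    Ex (fun x => |g x| ^ p)
      ≤ Ex (fun x => |g x|) ^ (2 - p) * Ex (fun x => g x ^ 2) ^ (p - 1) := by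
  set A := Ex (fun x => |g x|)
  set B := Ex (fun x => g x ^ 2)
  by_cases hg : ∃ x₀, g x₀ ≠ 0
  · obtain ⟨x₀, hx₀⟩ := hg
    have hA : 0 < A := Ex_pos (fun x => abs_nonneg _) (abs_pos.2 hx₀)
    have hB : 0 < B := Ex_pos (fun x => sq_nonneg _) (by positivity)
    calc Ex (fun x => |g x| ^ p)
        ≤ Ex (fun x => ((2 - p) * (|g x| / A) + (p - 1) * (|g x| ^ 2 / B))
            * (A ^ (2 - p) * B ^ (p - 1))) :=
          Ex_mono fun x => rpow_le_young_interpolation hp1 hp2 (abs_nonneg _) hA hB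
      _ = A ^ (2 - p) * B ^ (p - 1) := by
          set C := A ^ (2 - p) * B ^ (p - 1)
          have hlin : (fun x => ((2 - p) * (|g x| / A) + (p - 1) * (|g x| ^ 2 / B)) * C)
              = fun x => (2 - p) * C / A * |g x| + (p - 1) * C / B * g x ^ 2 :=
            funext fun x => by rw [sq_abs]; ring
          rw [hlin, Ex_add, Ex_const_mul, Ex_const_mul]
          field_simp
          ring
  · push Not at hg
    have hA : 0 ≤ A := Ex_nonneg fun x => abs_nonneg _
    have hB : 0 ≤ B := Ex_nonneg fun x => sq_nonneg _
    simp only [hg, abs_zero, zero_rpow (by linarith : p ≠ 0)]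
    simpa [Ex] using mul_nonneg (rpow_nonneg hA (2 - p)) (rpow_nonneg hB (p - 1))

lemma Ex_abs_rpow_le_of_sqrt_le {p K : ℝ} (hp1 : 1 ≤ p) (hp2 : p ≤ 2) (hK : 1 ≤ K)
    {g : (Fin n → Bool) → ℝ} (hg : √(Ex (fun x => g x ^ 2)) ≤ K * Ex (fun x => |g x|)) :
    Ex (fun x => |g x| ^ p) ≤ (K * Ex (fun x => |g x|)) ^ p := by
  set A := Ex (fun x => |g x|)
  have hA : 0 ≤ A := Ex_nonneg fun x => abs_nonneg _
  have hKA : 0 ≤ K * A := by positivity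
  calc Ex (fun x => |g x| ^ p)
      ≤ A ^ (2 - p) * Ex (fun x => g x ^ 2) ^ (p - 1) := Ex_abs_rpow_le_interpolation hp1 hp2 g
    _ ≤ (K * A) ^ (2 - p) * ((K * A) ^ 2) ^ (p - 1) := by
        have hB : 0 ≤ Ex (fun x => g x ^ 2) := Ex_nonneg fun x => sq_nonneg _
        exact mul_le_mul (rpow_le_rpow hA (le_mul_of_one_le_left hA hK) (by linarith))
          (rpow_le_rpow hB (sqrt_le_iff.1 hg).2 (by linarith)) (rpow_nonneg hB _)
          (rpow_nonneg hKA _)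
    _ = (K * A) ^ p := by
        rw [← rpow_natCast, ← rpow_mul hKA, ← rpow_add' hKA (by push_cast; linarith)]
        ring_nf

end TransitiveInvariant

open TransitiveInvariant in
theorem transitive_invariant_variance_general (n d : ℕ) (hn : 0 < n) (c : Finset (Fin n) → ℝ)
    (hdeg : ∀ S, c S ≠ 0 → S.card ≤ d)
    (htrans : ∀ i j : Fin n, ∃ σ : Equiv.Perm (Fin n),
      σ i = j ∧ ∀ x : Fin n → Bool, eval' c (fun k => x (σ k)) = eval' c x)
    (hhyper : ∀ c' : Finset (Fin n) → ℝ, (∀ S, c' S ≠ 0 → S.card ≤ d) →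
      Real.sqrt (Ex (fun x => (eval' c' x) ^ 2)) ≤ Real.exp d * Ex (fun x => |eval' c' x|))
    (hinf1 : (∑ i : Fin n, Ex (fun x => |(eval' c x - eval' c (flipAt x i)) / 2|))
      ≤ (d : ℝ) ^ 2) :
    (∀ p : ℝ, 1 ≤ p → p ≤ 2 →
      (∑ i : Fin n, Ex (fun x => |(eval' c x - eval' c (flipAt x i)) / 2| ^ p))
        ≤ (d : ℝ) ^ (2 * p) * Real.exp (p * d) / (n : ℝ) ^ (p - 1)) ∧
    (Ex (fun x => (eval' c x) ^ 2) - (Ex (fun x => eval' c x)) ^ 2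
      ≤ ∑ i : Fin n, Ex (fun x => ((eval' c x - eval' c (flipAt x i)) / 2) ^ 2)) ∧
    (∑ i : Fin n, Ex (fun x => ((eval' c x - eval' c (flipAt x i)) / 2) ^ 2)
      ≤ (d : ℝ) ^ 4 * Real.exp (2 * d) / n) := by
  simp only [← eval'_laplacian] at hinf1 ⊢
  have hn' : (0 : ℝ) < n := Nat.cast_pos.2 hn
  have hp : ∀ p : ℝ, 1 ≤ p → p ≤ 2 → ∑ i, Ex (fun x => |eval' (laplacian c i) x| ^ p)
      ≤ (d : ℝ) ^ (2 * p) * exp (p * d) / (n : ℝ) ^ (p - 1) := by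
    intro p hp1 hp2
    calc ∑ i, Ex (fun x => |eval' (laplacian c i) x| ^ p)
        ≤ ∑ _i : Fin n, (exp d * (d ^ 2 / n)) ^ p := sum_le_sum fun i _ =>
          (Ex_abs_rpow_le_of_sqrt_le hp1 hp2 (one_le_exp (Nat.cast_nonneg d))
            (hhyper _ (laplacian_degree_le hdeg i))).trans <|
          rpow_le_rpow (mul_nonneg (exp_pos _).le (Ex_nonneg fun x => abs_nonneg _))
            (mul_le_mul_of_nonneg_left (Ex_abs_laplacian_le_of_transitive hn htrans hinf1 i)
              (exp_pos _).le) (by linarith)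
      _ = (d : ℝ) ^ (2 * p) * exp (p * d) / (n : ℝ) ^ (p - 1) := by
        rw [sum_const, card_univ, Fintype.card_fin, nsmul_eq_mul, mul_rpow (exp_pos _).le
          (by positivity), div_rpow (by positivity) hn'.le, ← exp_mul, rpow_sub_one hn'.ne',
          ← rpow_natCast, ← rpow_mul (Nat.cast_nonneg d)]
        field_simp
        ring_nf
  refine ⟨hp, variance_le_sum_Ex_laplacian_sq c, ?_⟩
  have hp2 := hp 2 one_le_two le_rfl
  norm_num [sq_abs] at hp2
  exact hp2

theorem transitive_invariant_variance (n d : ℕ) (hn : 0 < n) (c : Finset (Fin n) → ℝ)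
    (hdeg : ∀ S, c S ≠ 0 → S.card ≤ d)
    (hbd : ∀ x, |eval' c x| ≤ 1)
    (htrans : ∀ i j : Fin n, ∃ σ : Equiv.Perm (Fin n),
      σ i = j ∧ ∀ x : Fin n → Bool, eval' c (fun k => x (σ k)) = eval' c x)
    (hhyper : ∀ c' : Finset (Fin n) → ℝ, (∀ S, c' S ≠ 0 → S.card ≤ d) →
      Real.sqrt (Ex (fun x => (eval' c' x) ^ 2)) ≤ Real.exp d * Ex (fun x => |eval' c' x|))
    (hinf1 : (∑ i : Fin n, Ex (fun x => |(eval' c x - eval' c (flipAt x i)) / 2|))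
      ≤ (d : ℝ) ^ 2) :
    (∀ p : ℝ, 1 ≤ p → p ≤ 2 →
      (∑ i : Fin n, Ex (fun x => |(eval' c x - eval' c (flipAt x i)) / 2| ^ p))
        ≤ (d : ℝ) ^ (2 * p) * Real.exp (p * d) / (n : ℝ) ^ (p - 1)) ∧
    (Ex (fun x => (eval' c x) ^ 2) - (Ex (fun x => eval' c x)) ^ 2
      ≤ ∑ i : Fin n, Ex (fun x => ((eval' c x - eval' c (flipAt x i)) / 2) ^ 2)) ∧
    (∑ i : Fin n, Ex (fun x => ((eval' c x - eval' c (flipAt x i)) / 2) ^ 2)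
      ≤ (d : ℝ) ^ 4 * Real.exp (2 * d) / n) :=
  transitive_invariant_variance_general n d hn c hdeg htrans hhyper hinf1
end

section
/- The function f₄ : {-1,1}^4 → {-1,1} defined by f₄(x,y,z,w) = (x(z+w) + y(z−w))/2 is Boolean-valued (takes values in {-1,1}), homogeneous of degree 2, and has total L1 influence exactly 2 and Δ(f₄)(v) = 2 for every v ∈ {-1,1}^4. -/
open Finset

theorem f4_example :
    let f : (Fin 4 → Bool) → ℝ := fun v =>
      (bval (v 0) * (bval (v 2) + bval (v 3)) + bval (v 1) * (bval (v 2) - bval (v 3))) / 2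
    -- Boolean-valued
    (∀ v, f v = 1 ∨ f v = -1) ∧
    -- homogeneous of degree 2: all monomials have degree 2
    (∀ v, f v = (bval (v 0) * bval (v 2) + bval (v 0) * bval (v 3)
      + bval (v 1) * bval (v 2) - bval (v 1) * bval (v 3)) / 2) ∧
    -- sensitivity 2 everywhere
    (∀ v, ∑ i : Fin 4, |f v - f (flipAt v i)| / 2 = 2) ∧
    -- total L1 influence exactly 2
    (∑ i : Fin 4, Ex (fun v => |f v - f (flipAt v i)| / 2)) = 2 := by
  intro f
  have hsens : ∀ v, ∑ i : Fin 4, |f v - f (flipAt v i)| / 2 = 2 := by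
    intro v
    simp only [f, Fin.sum_univ_four, flipAt, Function.update]
    norm_num
    rcases v 0 <;> rcases v 1 <;> rcases v 2 <;> rcases v 3 <;> simp [bval] <;> norm_num [abs]
  refine ⟨?_, ?_, hsens, ?_⟩
  · intro v
    simp only [f]
    rcases v 0 <;> rcases v 1 <;> rcases v 2 <;> rcases v 3 <;> simp [bval] <;> norm_num
  · intro v; simp only [f]; ring
  · have : (∑ i : Fin 4, Ex (fun v => |f v - f (flipAt v i)| / 2))
        = Ex (fun v => ∑ i : Fin 4, |f v - f (flipAt v i)| / 2) := by
      simp only [Ex, ← Finset.sum_div]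
      rw [Finset.sum_comm]
    rw [this]
    simp only [Ex]
    rw [Finset.sum_congr rfl (fun v _ => hsens v)]
    simp
    norm_num [Finset.card_univ]
end

section
/- The quadratic function s : {-1,1}^4 → ℝ defined by s(x,y,z,w) = (xy − zw)/2 + ((√2 − 1)/8)(xz + yw) satisfies |s(v)| ≤ 1 for all v ∈ {-1,1}^4 and Δ(s)(v) = 2 for every v ∈ {-1,1}^4; hence its total L1 influence equals 2, matching its degree. -/
/-!
Write `x, y, z, w = ±1` for the coordinates, `A = (xy - zw)/2` and `B = xz + yw`, so that
`s = A + cB` with `c = (√2 - 1)/8`. On the cube `A * B = 0`, hence `|s|` is `|A| ≤ 1` or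
`c|B| ≤ 2c`.
Flipping one coordinate changes `s` by twice that coordinate times a partial derivative of the
form `u/2 + c u'` with `u, u' = ±1`; as `c < 1/2` its absolute value is `1/2 + c u u'`, and the
four cross terms `c u u'` cancel in pairs, so `Δ(s) ≡ 2`.
-/

open Finset

@[simp]
lemma bval_not (b : Bool) : bval (!b) = -bval b := by
  cases b <;> simp [bval]

@[simp]
lemma flipAt_apply {n : ℕ} (x : Fin n → Bool) (i j : Fin n) :
    flipAt x i j = if j = i then !(x i) else x j := by
  simp [flipAt, Function.update_apply]

lemma sum_Ex {n : ℕ} {ι : Type*} (t : Finset ι) (g : ι → (Fin n → Bool) → ℝ) :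
    ∑ i ∈ t, Ex (g i) = Ex (fun x => ∑ i ∈ t, g i x) := by
  simp only [Ex, ← Finset.sum_div]
  rw [Finset.sum_comm]

lemma Ex_const {n : ℕ} (a : ℝ) : Ex (fun _ : Fin n → Bool => a) = a := by
  simp [Ex, Finset.card_univ]

section QuadForm

variable {c x y z w : ℝ}

noncomputable def quadForm (c x y z w : ℝ) : ℝ := (x * y - z * w) / 2 + c * (x * z + y * w)

lemma mul_self_eq_one_of_abs_eq_one {t : ℝ} (ht : |t| = 1) : t * t = 1 := by
  rw [← abs_mul_abs_self, ht, one_mul]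

lemma abs_half_add_mul {u u' : ℝ} (hc : |c| ≤ 1 / 2) (hu : |u| = 1) (hu' : |u'| = 1) :
    |u / 2 + c * u'| = 1 / 2 + c * u * u' := by
  have hcuu' : |c * u * u'| ≤ 1 / 2 := by rwa [abs_mul, abs_mul, hu, hu', mul_one, mul_one]
  calc |u / 2 + c * u'| = |u| * |1 / 2 + c * u * u'| := by
        rw [← abs_mul]
        congr 1
        linear_combination (-(c * u')) * mul_self_eq_one_of_abs_eq_one hu
    _ = 1 / 2 + c * u * u' := by
        rw [hu, one_mul, abs_of_nonneg (by linarith [neg_abs_le (c * u * u')])]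

lemma abs_quadForm_le_one (hc : |c| ≤ 1 / 2) (hx : |x| = 1) (hy : |y| = 1) (hz : |z| = 1)
    (hw : |w| = 1) : |quadForm c x y z w| ≤ 1 := by
  have hA : |(x * y - z * w) / 2| ≤ 1 := by
    rw [abs_div, abs_two, div_le_one two_pos]
    exact (abs_sub _ _).trans (by simp [abs_mul, hx, hy, hz, hw]; norm_num)
  have hB : |x * z + y * w| ≤ 2 :=
    (abs_add_le _ _).trans (by simp [abs_mul, hx, hy, hz, hw]; norm_num)
  have horth : (x * y - z * w) / 2 * (x * z + y * w) = 0 := by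
    linear_combination (y * z / 2) * mul_self_eq_one_of_abs_eq_one hx
      - (x * w / 2) * mul_self_eq_one_of_abs_eq_one hz
      + (x * w / 2) * mul_self_eq_one_of_abs_eq_one hy
      - (y * z / 2) * mul_self_eq_one_of_abs_eq_one hw
  unfold quadForm
  rcases mul_eq_zero.mp horth with hA0 | hB0
  · rw [hA0, zero_add, abs_mul]
    nlinarith [abs_nonneg c, abs_nonneg (x * z + y * w)]
  · rw [hB0, mul_zero, add_zero]
    exact hA

lemma quadForm_flip_sum_eq_two (hc : |c| ≤ 1 / 2) (hx : |x| = 1) (hy : |y| = 1) (hz : |z| = 1)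
    (hw : |w| = 1) :
    |quadForm c x y z w - quadForm c (-x) y z w| / 2
      + |quadForm c x y z w - quadForm c x (-y) z w| / 2
      + |quadForm c x y z w - quadForm c x y (-z) w| / 2
      + |quadForm c x y z w - quadForm c x y z (-w)| / 2 = 2 := by
  have hw' : |-w| = 1 := by rwa [abs_neg]
  have hz' : |-z| = 1 := by rwa [abs_neg]
  have half_abs_two_mul : ∀ {t d : ℝ}, |t| = 1 → |2 * t * d| / 2 = |d| := fun ht => by
    rw [abs_mul, abs_mul, ht, abs_two]; ring
  rw [show quadForm c x y z w - quadForm c (-x) y z w = 2 * x * (y / 2 + c * z) by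
        unfold quadForm; ring,
      show quadForm c x y z w - quadForm c x (-y) z w = 2 * y * (x / 2 + c * w) by
        unfold quadForm; ring,
      show quadForm c x y z w - quadForm c x y (-z) w = 2 * z * (-w / 2 + c * x) by
        unfold quadForm; ring,
      show quadForm c x y z w - quadForm c x y z (-w) = 2 * w * (-z / 2 + c * y) by
        unfold quadForm; ring,
      half_abs_two_mul hx, half_abs_two_mul hy, half_abs_two_mul hz, half_abs_two_mul hw, abs_half_add_mul hc hy hz,
      abs_half_add_mul hc hx hw, abs_half_add_mul hc hw' hx, abs_half_add_mul hc hz' hy]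
  ring

end QuadForm

theorem s_example :
    let s : (Fin 4 → Bool) → ℝ := fun v =>
      (bval (v 0) * bval (v 1) - bval (v 2) * bval (v 3)) / 2
      + ((Real.sqrt 2 - 1) / 8) * (bval (v 0) * bval (v 2) + bval (v 1) * bval (v 3))
    (∀ v, |s v| ≤ 1) ∧
    (∀ v, ∑ i : Fin 4, |s v - s (flipAt v i)| / 2 = 2) ∧
    (∑ i : Fin 4, Ex (fun v => |s v - s (flipAt v i)| / 2)) = 2 := by
  intro s
  have hc : |(Real.sqrt 2 - 1) / 8| ≤ 1 / 2 := by
    have h2 : Real.sqrt 2 < 2 := by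
      rw [Real.sqrt_lt' two_pos]; norm_num
    rw [abs_le]; constructor <;> linarith [Real.one_lt_sqrt_two]
  have hs : ∀ v, s v = quadForm ((Real.sqrt 2 - 1) / 8)
      (bval (v 0)) (bval (v 1)) (bval (v 2)) (bval (v 3)) := fun _ => rfl
  have hΔ : ∀ v, ∑ i : Fin 4, |s v - s (flipAt v i)| / 2 = 2 := fun v => by
    simp only [Fin.sum_univ_four, hs, flipAt_apply]
    simpa using quadForm_flip_sum_eq_two hc (abs_bval (v 0)) (abs_bval (v 1)) (abs_bval (v 2))
      (abs_bval (v 3))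
  refine ⟨fun v => ?_, hΔ, ?_⟩
  · rw [hs]
    exact abs_quadForm_le_one hc (abs_bval _) (abs_bval _) (abs_bval _) (abs_bval _)
  · rw [sum_Ex, funext hΔ, Ex_const]
end

section
/- Let h be a real univariate polynomial of degree at most 2 satisfying |h(ε)| ≤ max(1, ε²) for all ε ∈ ℝ. Then |h'(1)| ≤ 1 + √2, and this bound is attained by h(x) = (1/2 + 1/(2√2))(x² − 1) + x/√2. -/
/-
For a quadratic `h` the symmetric difference quotient is exact:
`h(1 + t) - h(1 - t) = 2t h'(1)`. At the nodes `1 ± √2` the constraint reads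
`|h(1 + √2)| ≤ (1 + √2)² = 3 + 2√2` and `|h(1 - √2)| ≤ 1`, so
`|h'(1)| ≤ (4 + 2√2) / (2√2) = 1 + √2`. The extremal quadratic attains both bounds at the
nodes: `ε² - h₀(ε)` and `h₀(ε) + 1` are nonnegative multiples of `(ε - 1 - √2)²` and
`(ε - 1 + √2)²`, so `-1 ≤ h₀(ε) ≤ ε²` everywhere.
-/

open Polynomial

theorem Polynomial.eval_add_sub_eval_sub_of_natDegree_le_two {R : Type*} [CommRing R]
    {p : R[X]} (hp : p.natDegree ≤ 2) (a t : R) :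
    p.eval (a + t) - p.eval (a - t) = 2 * t * p.derivative.eval a := by
  rw [p.as_sum_range' 3 (by omega)]
  simp only [Finset.sum_range_succ, Finset.sum_range_zero, eval_add, derivative_add,
    eval_monomial, derivative_monomial, zero_add]
  push_cast
  ring

theorem Polynomial.abs_derivative_eval_le_of_natDegree_le_two {p : ℝ[X]} (hp : p.natDegree ≤ 2)
    (a : ℝ) {t : ℝ} (ht : 0 < t) :
    |p.derivative.eval a| ≤ (|p.eval (a + t)| + |p.eval (a - t)|) / (2 * t) := by
  rw [le_div_iff₀ (by positivity), ← abs_of_pos (by positivity : 0 < 2 * t), ← abs_mul,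
    mul_comm, ← p.eval_add_sub_eval_sub_of_natDegree_le_two hp]
  exact abs_sub _ _

theorem abs_le_max_one_sq_of_neg_one_le_of_le_sq {x y : ℝ} (h₁ : -1 ≤ y)
    (h₂ : y ≤ x ^ 2) :
    |y| ≤ max 1 (x ^ 2) :=
  abs_le.mpr ⟨by linarith [le_max_left 1 (x ^ 2)], h₂.trans (le_max_right _ _)⟩

noncomputable def extremalQuadratic : ℝ[X] :=
  C (1 / 2 + 1 / (2 * √2)) * (X ^ 2 - 1) + C (1 / √2) * X

theorem natDegree_extremalQuadratic_le : extremalQuadratic.natDegree ≤ 2 := by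
  unfold extremalQuadratic
  compute_degree

theorem eval_extremalQuadratic (ε : ℝ) :
    extremalQuadratic.eval ε = (2 + √2) / 4 * (ε ^ 2 - 1) + √2 / 2 * ε := by
  have h : 1 / √2 = √2 / 2 := Real.sqrt_div_self'.symm
  simp only [extremalQuadratic, eval_add, eval_mul, eval_C, eval_sub, eval_pow, eval_X, eval_one,
    ← one_div_mul_one_div, h]
  ring

theorem eval_extremalQuadratic_le_sq (ε : ℝ) : extremalQuadratic.eval ε ≤ ε ^ 2 := by
  have hs : √2 ^ 2 = 2 := Real.sq_sqrt zero_le_two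
  have hfactor : ε ^ 2 - extremalQuadratic.eval ε = (2 - √2) / 4 * (ε - 1 - √2) ^ 2 := by
    rw [eval_extremalQuadratic]
    linear_combination (√2 - 2 * ε) / 4 * hs
  rw [← sub_nonneg, hfactor]
  exact mul_nonneg (by linarith [Real.sqrt_two_lt_three_halves]) (sq_nonneg _)

theorem neg_one_le_eval_extremalQuadratic (ε : ℝ) : -1 ≤ extremalQuadratic.eval ε := by
  have hs : √2 ^ 2 = 2 := Real.sq_sqrt zero_le_two
  have hfactor : extremalQuadratic.eval ε + 1 = (2 + √2) / 4 * (ε - 1 + √2) ^ 2 := by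
    rw [eval_extremalQuadratic]
    linear_combination -(√2 + 2 * ε) / 4 * hs
  rw [neg_le_iff_add_nonneg, hfactor]
  positivity

theorem derivative_extremalQuadratic_eval_one : extremalQuadratic.derivative.eval 1 = 1 + √2 := by
  have h : (√2)⁻¹ = √2 / 2 := Real.sqrt_div_self.symm
  simp only [extremalQuadratic, one_div, mul_inv_rev, h, map_add, map_mul, derivative_mul,
    derivative_C, zero_mul, mul_zero, add_zero, derivative_sub, derivative_X_pow_succ,
    Nat.cast_one, map_one, pow_one, derivative_one, sub_zero, zero_add, derivative_X, mul_one,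
    eval_add, eval_mul, eval_C, eval_one, eval_X]
  ring

theorem K2_eq_one_add_sqrt_two :
    (∀ h : Polynomial ℝ, h.natDegree ≤ 2 → (∀ ε : ℝ, |h.eval ε| ≤ max 1 (ε ^ 2)) →
      |h.derivative.eval 1| ≤ 1 + Real.sqrt 2) ∧
    (let h₀ : Polynomial ℝ :=
      C (1 / 2 + 1 / (2 * Real.sqrt 2)) * (X ^ 2 - 1) + C (1 / Real.sqrt 2) * X
     h₀.natDegree ≤ 2 ∧ (∀ ε : ℝ, |h₀.eval ε| ≤ max 1 (ε ^ 2)) ∧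
      h₀.derivative.eval 1 = 1 + Real.sqrt 2) := by
  refine ⟨fun h hd hb => ?_, natDegree_extremalQuadratic_le,
    fun ε => abs_le_max_one_sq_of_neg_one_le_of_le_sq (neg_one_le_eval_extremalQuadratic ε)
      (eval_extremalQuadratic_le_sq ε), derivative_extremalQuadratic_eval_one⟩
  have hs : √2 ^ 2 = 2 := Real.sq_sqrt zero_le_two
  have hs₁ := Real.one_lt_sqrt_two
  have h_right : |h.eval (1 + √2)| ≤ (1 + √2) ^ 2 :=
    (hb _).trans (max_eq_right (by nlinarith)).le
  have h_left : |h.eval (1 - √2)| ≤ 1 := (hb _).trans (max_eq_left (by nlinarith)).le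
  calc |h.derivative.eval 1|
      ≤ (|h.eval (1 + √2)| + |h.eval (1 - √2)|) / (2 * √2) :=
        h.abs_derivative_eval_le_of_natDegree_le_two hd 1 (by positivity)
    _ ≤ ((1 + √2) ^ 2 + 1) / (2 * √2) := by gcongr
    _ = 1 + √2 := by
        field_simp
        linear_combination -hs
end

section
/- Let f : {-1,1}^n → [-1,1] be homogeneous of degree d, and suppose that for the noised function g = T_α f with α = 1 − 1/d one has Δ(g)(x) ≤ d/√(1−α²) for all x ∈ {-1,1}^n. Then, since Δ(g)(x) = α^d Δ(f)(x) by homogeneity, it follows that Δ(f)(x) ≤ (1−1/d)^{−d} · d/√(1−(1−1/d)²) = O(d^{3/2}) for all x, and hence Inf^{(1)}[f] = O(d^{3/2}). -/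
open Finset

lemma eval'_smul {n d : ℕ} (c : Finset (Fin n) → ℝ) (α : ℝ)
    (hhom : ∀ S, c S ≠ 0 → S.card = d) (x : Fin n → Bool) :
    eval' (fun S => α ^ S.card * c S) x = α ^ d * eval' c x := by
  unfold eval'
  rw [Finset.mul_sum]
  refine Finset.sum_congr rfl fun S _ => ?_
  by_cases h : c S = 0
  · simp [h]
  · dsimp only; rw [hhom S h]; ring

theorem homogeneous_d32_bound (n d : ℕ) (hd : 2 ≤ d) (c : Finset (Fin n) → ℝ)
    (hbd : ∀ x, |eval' c x| ≤ 1)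
    (hhom : ∀ S, c S ≠ 0 → S.card = d)
    (hsar : ∀ x : Fin n → Bool,
      ∑ i : Fin n,
        |eval' (fun S => (1 - 1 / (d : ℝ)) ^ S.card * c S) x
          - eval' (fun S => (1 - 1 / (d : ℝ)) ^ S.card * c S) (flipAt x i)| / 2
        ≤ (d : ℝ) / Real.sqrt (1 - (1 - 1 / (d : ℝ)) ^ 2)) :
    (∀ x : Fin n → Bool,
      ∑ i : Fin n, |eval' c x - eval' c (flipAt x i)| / 2
        ≤ ((1 - 1 / (d : ℝ)) ^ d)⁻¹ * ((d : ℝ) / Real.sqrt (1 - (1 - 1 / (d : ℝ)) ^ 2))) ∧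
    (∑ i : Fin n, Ex (fun x => |eval' c x - eval' c (flipAt x i)| / 2))
      ≤ ((1 - 1 / (d : ℝ)) ^ d)⁻¹ * ((d : ℝ) / Real.sqrt (1 - (1 - 1 / (d : ℝ)) ^ 2)) := by
  set α : ℝ := 1 - 1 / (d : ℝ) with hα
  have hd2 : (2:ℝ) ≤ (d:ℝ) := by exact_mod_cast hd
  have hαpos : 0 < α := by
    have : 1 / (d:ℝ) ≤ 1/2 := by
      apply one_div_le_one_div_of_le <;> linarith
    simp only [hα]; linarith
  have hαd : 0 < α ^ d := pow_pos hαpos d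
  have key : ∀ x : Fin n → Bool,
      ∑ i : Fin n, |eval' c x - eval' c (flipAt x i)| / 2
        ≤ (α ^ d)⁻¹ * ((d : ℝ) / Real.sqrt (1 - α ^ 2)) := by
    intro x
    have h := hsar x
    have hrw : ∀ y i, |eval' (fun S => α ^ S.card * c S) y
          - eval' (fun S => α ^ S.card * c S) (flipAt y i)|
        = α ^ d * |eval' c y - eval' c (flipAt y i)| := by
      intro y i
      rw [eval'_smul c α hhom, eval'_smul c α hhom, ← mul_sub, abs_mul,
        abs_of_pos hαd]
    simp only [hrw] at h
    calc ∑ i : Fin n, |eval' c x - eval' c (flipAt x i)| / 2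
          = (α ^ d)⁻¹ * ∑ i : Fin n, α ^ d * |eval' c x - eval' c (flipAt x i)| / 2 := by
            rw [Finset.mul_sum]
            refine Finset.sum_congr rfl fun i _ => ?_
            field_simp
      _ ≤ (α ^ d)⁻¹ * ((d : ℝ) / Real.sqrt (1 - α ^ 2)) := by
            apply mul_le_mul_of_nonneg_left _ (inv_nonneg.2 hαd.le)
            exact h
  refine ⟨key, ?_⟩
  have hswap : (∑ i : Fin n, Ex (fun x => |eval' c x - eval' c (flipAt x i)| / 2))
      = Ex (fun x => ∑ i : Fin n, |eval' c x - eval' c (flipAt x i)| / 2) := by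
    unfold Ex
    rw [← Finset.sum_div, Finset.sum_comm]
  rw [hswap]
  unfold Ex
  rw [div_le_iff₀ (by positivity : (0:ℝ) < 2 ^ n)]
  calc (∑ x : Fin n → Bool, ∑ i : Fin n, |eval' c x - eval' c (flipAt x i)| / 2)
      ≤ ∑ _x : Fin n → Bool, (α ^ d)⁻¹ * ((d : ℝ) / Real.sqrt (1 - α ^ 2)) :=
        Finset.sum_le_sum fun x _ => key x
    _ = (α ^ d)⁻¹ * ((d : ℝ) / Real.sqrt (1 - α ^ 2)) * 2 ^ n := by
        rw [Finset.sum_const, Finset.card_univ]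
        simp [Fintype.card_fun, mul_comm]
end
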